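/- arXiv:2003.10139 — 9 statements merged into one kernel-verified Lean document; each statement's English description precedes it below -/
import Mathlib

section
/- If G is a bipartite graph, H is the subgraph of G induced by a strong clique of G, and M is a matching of H of size m, then the subgraph of G induced by the vertex set V(M) contains a path on 2m vertices containing all edges of M. -/
/-- A strong clique of `G`: a set of edges of `G` such that every pair of edges
either shares an endpoint or is joined by an edge of `G`. -/
def IsStrongClique {V : Type*} (G : SimpleGraph V) (S : Set (Sym2 V)) : Prop :=
  S ⊆ G.edgeSet ∧
    ∀ e ∈ S, ∀ f ∈ S, ∃ a b, a ∈ e ∧ b ∈ f ∧ (a = b ∨ G.Adj a b)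

/-!
Two-colour `G` and orient every edge of `M` from colour `0` to colour `1`. The strong clique
gives an edge between any two distinct edges of `M`; it can join neither two tails nor two
heads, so it joins the head of one to the tail of the other. Hence "the head of `e` is adjacent
to the tail of `f`" is a total relation on `M`, and a Hamiltonian path of this tournament lists
`M` as `e₁, …, e_m` with `head eᵢ ~ tail eᵢ₊₁`. The walk
`tail e₁, head e₁, tail e₂, …, head e_m` is then a path because the edges of `M` are disjoint.
-/

namespace List

variable {α : Type*} {r : α → α → Prop} [DecidableRel r]

theorem IsChain.cons_orderedInsert (htot : ∀ a b, r a b ∨ r b a) {a b : α} (hba : r b a) :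
    ∀ {l : List α}, IsChain r (b :: l) → IsChain r (b :: l.orderedInsert r a)
  | [], _ => isChain_pair.2 hba
  | c :: l, h => by
    by_cases hac : r a c
    · simpa [hac] using ⟨hba, h.tail⟩
    · rw [isChain_cons_cons] at h
      simpa [hac] using ⟨h.1, IsChain.cons_orderedInsert htot ((htot a c).resolve_left hac) h.2⟩

theorem IsChain.orderedInsert (htot : ∀ a b, r a b ∨ r b a) (a : α) :
    ∀ {l : List α}, IsChain r l → IsChain r (l.orderedInsert r a)
  | [], _ => isChain_singleton a
  | c :: l, h => by
    by_cases hac : r a c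
    · simpa [hac] using h
    · simpa [hac] using h.cons_orderedInsert htot ((htot a c).resolve_left hac)

/-- Transitivity is not needed: this is Rédei's theorem that every tournament has a
Hamiltonian path. -/
theorem isChain_insertionSort (htot : ∀ a b, r a b ∨ r b a) :
    ∀ l : List α, IsChain r (l.insertionSort r)
  | [] => .nil
  | a :: l => (isChain_insertionSort htot l).orderedInsert htot a

end List

namespace SimpleGraph

variable {V : Type*} {G : SimpleGraph V}

theorem exists_walk_of_isChain_darts :
    ∀ (d : G.Dart) (ds : List G.Dart), (d :: ds).IsChain (fun d₁ d₂ => G.Adj d₁.snd d₂.fst) →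
      ∃ (w : V) (p : G.Walk d.fst w),
        p.support = (d :: ds).flatMap (fun d => [d.fst, d.snd]) ∧
        p.length = 2 * ds.length + 1 ∧ ∀ d' ∈ d :: ds, d'.edge ∈ p.edges
  | d, [], _ => ⟨d.snd, .cons d.adj .nil, by simp, by simp, by simp [Dart.edge]⟩
  | d, d' :: ds, h => by
    rw [List.isChain_cons_cons] at h
    obtain ⟨w, p, hsupp, hlen, hedges⟩ := exists_walk_of_isChain_darts d' ds h.2
    refine ⟨w, .cons d.adj (.cons h.1 p), by simp [hsupp],
      by simp only [Walk.length_cons, hlen, List.length_cons]; ring, ?_⟩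
    rintro d'' (_ | ⟨_, hd''⟩)
    · exact List.mem_cons_self
    · simp [hedges d'' hd'']

theorem Dart.mem_edge_iff (d : G.Dart) {v : V} : v ∈ d.edge ↔ v = d.fst ∨ v = d.snd :=
  Sym2.mem_iff

theorem mem_flatMap_darts_iff {ds : List G.Dart} {v : V} :
    v ∈ ds.flatMap (fun d => [d.fst, d.snd]) ↔ ∃ d ∈ ds, v ∈ d.edge := by
  simp [Dart.mem_edge_iff]

theorem nodup_flatMap_darts {ds : List G.Dart}
    (h : ds.Pairwise fun d₁ d₂ => ∀ v ∈ d₁.edge, v ∉ d₂.edge) :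
    (ds.flatMap fun d => [d.fst, d.snd]).Nodup := by
  refine List.nodup_flatMap.2 ⟨fun d _ => by simp [d.fst_ne_snd], h.imp fun h' => ?_⟩
  exact List.disjoint_left.2 fun _ hv₁ hv₂ =>
    h' _ (by simpa [Dart.mem_edge_iff] using hv₁) (by simpa [Dart.mem_edge_iff] using hv₂)

namespace Coloring

variable (C : G.Coloring (Fin 2))

theorem exists_dart_edge_eq_color_fst_eq_zero {e : Sym2 V} (he : e ∈ G.edgeSet) :
    ∃ d : G.Dart, d.edge = e ∧ C d.fst = 0 := by
  induction e using Sym2.ind with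
  | _ a b =>
    by_cases ha : C a = 0
    · exact ⟨⟨(a, b), he⟩, rfl, ha⟩
    · refine ⟨⟨(b, a), G.adj_symm he⟩, Sym2.eq_swap, ?_⟩
      by_contra hb
      exact C.valid he ((Fin.eq_one_of_ne_zero _ ha).trans (Fin.eq_one_of_ne_zero _ hb).symm)

theorem color_snd_eq_one {d : G.Dart} (hd : C d.fst = 0) : C d.snd = 1 :=
  Fin.eq_one_of_ne_zero _ fun h => C.valid d.adj (hd.trans h.symm)

theorem adj_snd_fst_or_adj_snd_fst {d₁ d₂ : G.Dart} (h₁ : C d₁.fst = 0) (h₂ : C d₂.fst = 0)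
    {a b : V} (ha : a ∈ d₁.edge) (hb : b ∈ d₂.edge) (hab : G.Adj a b) :
    G.Adj d₁.snd d₂.fst ∨ G.Adj d₂.snd d₁.fst := by
  have hC : C a ≠ C b := C.valid hab
  rcases d₁.mem_edge_iff.1 ha with rfl | rfl <;> rcases d₂.mem_edge_iff.1 hb with rfl | rfl
  · exact absurd (h₁.trans h₂.symm) hC
  · exact .inr hab.symm
  · exact .inl hab
  · exact absurd ((C.color_snd_eq_one h₁).trans (C.color_snd_eq_one h₂).symm) hC

end Coloring

theorem exists_isChain_darts_of_forall_adj (hG : G.Colorable 2) {M : Finset (Sym2 V)}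
    (hM : ∀ e ∈ M, e ∈ G.edgeSet)
    (hjoin : ∀ e ∈ M, ∀ f ∈ M, e ≠ f → ∃ a ∈ e, ∃ b ∈ f, G.Adj a b) :
    ∃ ds : List G.Dart, (ds.map Dart.edge).Perm M.toList ∧
      ds.IsChain fun d₁ d₂ => G.Adj d₁.snd d₂.fst := by
  classical
  obtain ⟨C⟩ := hG
  choose d hd_edge hd_fst using fun e : M => C.exists_dart_edge_eq_color_fst_eq_zero (hM e e.2)
  let r : M → M → Prop := fun x y => G.Adj (d x).snd (d y).fst
  have htot : ∀ x y, r x y ∨ r y x := by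
    intro x y
    obtain rfl | hxy := eq_or_ne x y
    · exact .inl (d x).adj.symm
    obtain ⟨a, ha, b, hb, hab⟩ := hjoin x x.2 y y.2 (Subtype.coe_injective.ne hxy)
    exact C.adj_snd_fst_or_adj_snd_fst (hd_fst x) (hd_fst y) (hd_edge x ▸ ha) (hd_edge y ▸ hb) hab
  refine ⟨(M.attach.toList.insertionSort r).map d, ?_,
    (List.isChain_map d).2 (List.isChain_insertionSort htot _)⟩
  rw [List.map_map, show Dart.edge ∘ d = Subtype.val from funext hd_edge]
  refine ((List.perm_insertionSort r _).map _).trans ?_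
  rw [List.perm_ext_iff_of_nodup (M.attach.nodup_toList.map Subtype.val_injective) M.nodup_toList]
  simp

end SimpleGraph

open SimpleGraph in
theorem stmt0_general {V : Type*} (G : SimpleGraph V)
    (hbip : G.Colorable 2)
    (S : Set (Sym2 V)) (hS : IsStrongClique G S)
    (M : Finset (Sym2 V)) (hMS : ↑M ⊆ S)
    (hmatch : ∀ e ∈ M, ∀ f ∈ M, e ≠ f → ∀ v : V, v ∈ e → v ∉ f)
    (m : ℕ) (hm : M.card = m) (hm1 : 1 ≤ m) :
    ∃ (u w : V) (P : G.Walk u w), P.IsPath ∧ P.length = 2 * m - 1 ∧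
      (∀ v ∈ P.support, ∃ e ∈ M, v ∈ e) ∧ (∀ e ∈ M, e ∈ P.edges) := by
  have hjoin : ∀ e ∈ M, ∀ f ∈ M, e ≠ f → ∃ a ∈ e, ∃ b ∈ f, G.Adj a b := by
    intro e he f hf hef
    obtain ⟨a, b, ha, hb, rfl | hab⟩ := hS.2 e (hMS he) f (hMS hf)
    · exact absurd hb (hmatch e he f hf hef a ha)
    · exact ⟨a, ha, b, hb, hab⟩
  obtain ⟨ds, hperm, hchain⟩ :=
    exists_isChain_darts_of_forall_adj hbip (fun e he => hS.1 (hMS he)) hjoin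
  have hlen : ds.length = m := by simpa [hm] using hperm.length_eq
  obtain _ | ⟨d, ds⟩ := ds
  · simp only [List.length_nil] at hlen
    omega
  obtain ⟨w, p, hsupp, hplen, hedges⟩ := exists_walk_of_isChain_darts d ds hchain
  have hmemM {d'} (hd' : d' ∈ d :: ds) : d'.edge ∈ M :=
    M.mem_toList.1 (hperm.subset (List.mem_map_of_mem hd'))
  refine ⟨_, w, p, ?_, ?_, ?_, ?_⟩
  · rw [Walk.isPath_def, hsupp]
    refine nodup_flatMap_darts <|
      (List.pairwise_map.1 (hperm.nodup_iff.2 M.nodup_toList)).imp_of_mem ?_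
    exact fun hd₁ hd₂ hne => hmatch _ (hmemM hd₁) _ (hmemM hd₂) hne
  · simp only [List.length_cons] at hlen
    omega
  · intro v hv
    obtain ⟨d', hd', hv⟩ := mem_flatMap_darts_iff.1 (hsupp ▸ hv)
    exact ⟨_, hmemM hd', hv⟩
  · intro e he
    obtain ⟨d', hd', rfl⟩ := List.mem_map.1 (hperm.mem_iff.2 (M.mem_toList.2 he))
    exact hedges d' hd'

/-- If `G` is a bipartite graph, `H` is the subgraph of `G` induced by a strong clique
of `G`, and `M` is a matching of `H` of size `m ≥ 1`, then `G[V(M)]` contains a path on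
`2m` vertices (i.e. of length `2m - 1`) containing all the edges of `M`. -/
theorem stmt0 {V : Type*} [Fintype V] [DecidableEq V] (G : SimpleGraph V)
    (hbip : G.Colorable 2)
    (S : Set (Sym2 V)) (hS : IsStrongClique G S)
    (M : Finset (Sym2 V)) (hMS : ↑M ⊆ S)
    (hmatch : ∀ e ∈ M, ∀ f ∈ M, e ≠ f → ∀ v : V, v ∈ e → v ∉ f)
    (m : ℕ) (hm : M.card = m) (hm1 : 1 ≤ m) :
    ∃ (u w : V) (P : G.Walk u w), P.IsPath ∧ P.length = 2 * m - 1 ∧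
      (∀ v ∈ P.support, ∃ e ∈ M, v ∈ e) ∧ (∀ e ∈ M, e ∈ P.edges) :=
  stmt0_general G hbip S hS M hMS hmatch m hm hm1
end

section
/- Let S be a strong clique of a graph G such that G is S-minimal. Then the diameter of G is at most 3. -/
/-- `S` is a strong clique of the subgraph `H` of `G`: all edges of `S` are edges of `H`,
and every pair of edges of `S` either shares an endpoint or is joined by an edge of `H`. -/
def IsStrongCliqueOn {V : Type*} {G : SimpleGraph V} (H : G.Subgraph) (S : Set (Sym2 V)) : Prop :=
  S ⊆ H.edgeSet ∧
    ∀ e ∈ S, ∀ f ∈ S, ∃ a b, a ∈ e ∧ b ∈ f ∧ (a = b ∨ H.Adj a b)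

/-- `G` is `S`-minimal: `S` is a strong clique of `G`, and `S` is not a strong clique of
any proper subgraph of `G` (i.e. the only subgraph of `G` for which `S` is a strong clique
is `G` itself). -/
def IsMinimalFor {V : Type*} (G : SimpleGraph V) (S : Set (Sym2 V)) : Prop :=
  IsStrongCliqueOn (⊤ : G.Subgraph) S ∧
    ∀ H : G.Subgraph, IsStrongCliqueOn H S → H = ⊤

/-!
Minimality forces every vertex to lie on an edge of `S`: a vertex on no edge of `S` could be
deleted without affecting `S`. Given `u` and `v`, pick edges `e ∋ u` and `f ∋ v` of `S`; the
strong-clique condition gives `a ∈ e` and `b ∈ f` that are equal or adjacent, and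
`u, a, b, v` is a walk of length at most 3.
-/

open SimpleGraph

section

variable {V : Type*} {G : SimpleGraph V}

theorem SimpleGraph.eq_or_adj_of_mem_of_mem_edgeSet {e : Sym2 V} (he : e ∈ G.edgeSet)
    {x y : V} (hx : x ∈ e) (hy : y ∈ e) : x = y ∨ G.Adj x y := by
  by_cases hxy : x = y
  · exact .inl hxy
  · rw [(Sym2.mem_and_mem_iff hxy).mp ⟨hx, hy⟩] at he
    exact .inr he

theorem SimpleGraph.exists_walk_length_le_one {x y : V} (h : x = y ∨ G.Adj x y) :
    ∃ p : G.Walk x y, p.length ≤ 1 := by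
  rcases h with rfl | hxy
  · exact ⟨.nil, zero_le_one⟩
  · exact ⟨hxy.toWalk, le_rfl⟩

theorem IsStrongCliqueOn.deleteVerts {H : G.Subgraph} {S : Set (Sym2 V)}
    (hS : IsStrongCliqueOn H S) {s : Set V} (hs : ∀ e ∈ S, ∀ w ∈ s, w ∉ e) :
    IsStrongCliqueOn (H.deleteVerts s) S := by
  obtain ⟨hsub, hpair⟩ := hS
  refine ⟨fun e he => ?_, fun e he f hf => ?_⟩
  · have hdel : ∀ x ∈ e, x ∉ s := fun x hx hxs => hs e he x hxs hx
    have heH := hsub he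
    induction e using Sym2.ind with
    | _ x y =>
      have hxy : H.Adj x y := heH
      exact (Subgraph.deleteVerts_adj).mpr ⟨hxy.fst_mem, hdel x (Sym2.mem_mk_left x y),
        hxy.snd_mem, hdel y (Sym2.mem_mk_right x y), hxy⟩
  · obtain ⟨a, b, ha, hb, hab⟩ := hpair e he f hf
    refine ⟨a, b, ha, hb, hab.imp_right fun hadj => ?_⟩
    exact (Subgraph.deleteVerts_adj).mpr ⟨hadj.fst_mem, fun has => hs e he a has ha,
      hadj.snd_mem, fun hbs => hs f hf b hbs hb, hadj⟩

theorem IsMinimalFor.exists_mem {S : Set (Sym2 V)} (hmin : IsMinimalFor G S) (w : V) :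
    ∃ e ∈ S, w ∈ e := by
  by_contra! hw
  have htop := hmin.2 _ (hmin.1.deleteVerts (s := {w}) fun e he x hx => hx ▸ hw e he)
  have hmem : w ∈ ((⊤ : G.Subgraph).deleteVerts {w}).verts := by
    rw [htop]; trivial
  exact hmem.2 rfl

end

/-- If `G` is `S`-minimal for a strong clique `S`, then the diameter of `G` is at most 3:
any two vertices are joined by a walk of length at most 3. -/
theorem stmt4 {V : Type*} (G : SimpleGraph V) (S : Set (Sym2 V))
    (hmin : IsMinimalFor G S) :
    ∀ u v : V, ∃ p : G.Walk u v, p.length ≤ 3 := by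
  intro u v
  obtain ⟨e, he, hue⟩ := hmin.exists_mem u
  obtain ⟨f, hf, hvf⟩ := hmin.exists_mem v
  obtain ⟨a, b, hae, hbf, hab⟩ := hmin.1.2 e he f hf
  have hsub : S ⊆ G.edgeSet := hmin.1.1
  obtain ⟨p₁, hp₁⟩ :=
    exists_walk_length_le_one (eq_or_adj_of_mem_of_mem_edgeSet (hsub he) hue hae)
  obtain ⟨p₂, hp₂⟩ := exists_walk_length_le_one (hab.imp_right Subgraph.Adj.adj_sub)
  obtain ⟨p₃, hp₃⟩ :=
    exists_walk_length_le_one (eq_or_adj_of_mem_of_mem_edgeSet (hsub hf) hbf hvf)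
  refine ⟨(p₁.append p₂).append p₃, ?_⟩
  simp only [Walk.length_append]
  omega
end

section
/- Let S be a strong clique of a graph G such that G is S-minimal. Then for every edge uv of G not in S, there exist edges uu' and vv' in S such that uv is the only edge of G joining an endpoint of uu' to an endpoint of vv'. -/
open SimpleGraph

section

variable {V : Type*} {G : SimpleGraph V} {S : Set (Sym2 V)} {u v : V}

lemma IsMinimalFor.not_isStrongCliqueOn_deleteEdges (hmin : IsMinimalFor G S) (huv : G.Adj u v) :
    ¬ IsStrongCliqueOn ((⊤ : G.Subgraph).deleteEdges {s(u, v)}) S := by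
  intro h
  have hadj : ((⊤ : G.Subgraph).deleteEdges {s(u, v)}).Adj u v := by
    rw [hmin.2 _ h]
    exact huv
  exact ((Subgraph.deleteEdges_adj _ _ _).1 hadj).2 rfl

lemma IsMinimalFor.exists_pair_joined_only_by (hmin : IsMinimalFor G S) (huv : G.Adj u v)
    (hnS : s(u, v) ∉ S) :
    ∃ e ∈ S, ∃ f ∈ S, ∀ x ∈ e, ∀ y ∈ f, x ≠ y ∧ (G.Adj x y → s(x, y) = s(u, v)) := by
  by_contra! h
  refine hmin.not_isStrongCliqueOn_deleteEdges huv ⟨fun e he => ?_, fun e he f hf => ?_⟩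
  · induction e with
    | h x y =>
      refine (Subgraph.deleteEdges_adj _ _ _).2 ⟨hmin.1.1 he, ?_⟩
      intro hxy
      exact hnS (Set.mem_singleton_iff.1 hxy ▸ he)
  · obtain ⟨x, hx, y, hy, hxy⟩ := h e he f hf
    refine ⟨x, y, hx, hy, ?_⟩
    by_cases hne : x = y
    · exact Or.inl hne
    · exact Or.inr ((Subgraph.deleteEdges_adj _ _ _).2 (hxy hne))

lemma exists_edges_joined_only_by {e f : Sym2 V} (he : e ∈ S) (hf : f ∈ S) (hu : u ∈ e)
    (hv : v ∈ f) (hef : ∀ x ∈ e, ∀ y ∈ f, G.Adj x y → s(x, y) = s(u, v)) :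
    ∃ u' v' : V, s(u, u') ∈ S ∧ s(v, v') ∈ S ∧
      ∀ a b : V, (a = u ∨ a = u') → (b = v ∨ b = v') → G.Adj a b → s(a, b) = s(u, v) := by
  obtain ⟨u', rfl⟩ := Sym2.mem_iff_exists.1 hu
  obtain ⟨v', rfl⟩ := Sym2.mem_iff_exists.1 hv
  exact ⟨u', v', he, hf, fun a b ha hb => hef a (Sym2.mem_iff.2 ha) b (Sym2.mem_iff.2 hb)⟩

end

/-- If `G` is `S`-minimal for a strong clique `S`, then for every edge `uv` of `G` not
in `S` there are edges `uu'`, `vv'` in `S` such that `uv` is the only edge of `G` joining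
an endpoint of `uu'` to an endpoint of `vv'`. -/
theorem stmt5 {V : Type*} (G : SimpleGraph V) (S : Set (Sym2 V))
    (hmin : IsMinimalFor G S) {u v : V} (huv : G.Adj u v) (hnS : s(u, v) ∉ S) :
    ∃ u' v' : V, s(u, u') ∈ S ∧ s(v, v') ∈ S ∧
      ∀ a b : V, (a = u ∨ a = u') → (b = v ∨ b = v') → G.Adj a b →
        s(a, b) = s(u, v) := by
  obtain ⟨e, he, f, hf, hef⟩ := hmin.exists_pair_joined_only_by huv hnS
  obtain ⟨x, y, hx, hy, hxy⟩ := hmin.1.2 e he f hf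
  have hGxy : G.Adj x y := (hxy.resolve_left (hef x hx y hy).1).adj_sub
  have hef' : ∀ x ∈ e, ∀ y ∈ f, G.Adj x y → s(x, y) = s(u, v) :=
    fun x hx y hy => (hef x hx y hy).2
  rcases Sym2.eq_iff.1 (hef' x hx y hy hGxy) with ⟨rfl, rfl⟩ | ⟨rfl, rfl⟩
  · exact exists_edges_joined_only_by he hf hx hy hef'
  · exact exists_edges_joined_only_by hf he hy hx fun a ha b hb hab =>
      Sym2.eq_swap.trans (hef' b hb a ha hab.symm)
end

section
/- Let S be a maximum strong clique of a graph G such that G is S-minimal. Then for every edge uv of G not in S, there is an edge xy in S whose distance from uv in the line graph of G is at least 3. -/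
/-! If every edge of `S` shared an endpoint with `uv` or were joined to it by an edge, then
`S ∪ {uv}` would be a strong clique with one more edge than the maximum strong clique `S`. -/

namespace IsStrongClique

variable {V : Type*} {G : SimpleGraph V}

lemma of_isStrongCliqueOn_top {S : Set (Sym2 V)} (h : IsStrongCliqueOn (⊤ : G.Subgraph) S) :
    IsStrongClique G S := by
  simpa [IsStrongClique, IsStrongCliqueOn] using h

lemma insert {S : Set (Sym2 V)} (hS : IsStrongClique G S) {e : Sym2 V} (he : e ∈ G.edgeSet)
    (hclose : ∀ f ∈ S, ∃ a b, a ∈ e ∧ b ∈ f ∧ (a = b ∨ G.Adj a b)) :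
    IsStrongClique G (insert e S) := by
  refine ⟨Set.insert_subset he hS.1, ?_⟩
  rintro f (rfl | hf) g (rfl | hg)
  · exact ⟨_, _, Sym2.out_fst_mem _, Sym2.out_fst_mem _, Or.inl rfl⟩
  · exact hclose g hg
  · obtain ⟨a, b, ha, hb, hab⟩ := hclose f hf
    exact ⟨b, a, hb, ha, hab.imp Eq.symm SimpleGraph.Adj.symm⟩
  · exact hS.2 f hf g hg

end IsStrongClique

theorem stmt6_general {V : Type*} (G : SimpleGraph V)
    (S : Finset (Sym2 V))
    (hmin : IsMinimalFor G ↑S)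
    (hmax : ∀ T : Finset (Sym2 V), IsStrongClique G ↑T → T.card ≤ S.card)
    {u v : V} (huv : G.Adj u v) (hnS : s(u, v) ∉ S) :
    ∃ e ∈ S, ∀ a ∈ e, ∀ b ∈ s(u, v), a ≠ b ∧ ¬ G.Adj a b := by
  classical
  by_contra! hfar
  have hclose : ∀ f ∈ (S : Set (Sym2 V)), ∃ a b, a ∈ s(u, v) ∧ b ∈ f ∧ (a = b ∨ G.Adj a b) := by
    intro f hf
    obtain ⟨b, hb, a, ha, hab⟩ := hfar f hf
    exact ⟨a, b, ha, hb, (eq_or_ne b a).imp Eq.symm fun hne => (hab hne).symm⟩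
  have hT := (IsStrongClique.of_isStrongCliqueOn_top hmin.1).insert huv hclose
  rw [← Finset.coe_insert] at hT
  have := hmax _ hT
  rw [Finset.card_insert_of_notMem hnS] at this
  omega

/-- If `S` is a maximum strong clique of `G` and `G` is `S`-minimal, then for every edge
`uv` of `G` not in `S` there is an edge of `S` at distance at least 3 from `uv` in the
line graph of `G`: it shares no endpoint with `uv` and no edge of `G` joins them. -/
theorem stmt6 {V : Type*} [Fintype V] [DecidableEq V] (G : SimpleGraph V)
    (S : Finset (Sym2 V))
    (hmin : IsMinimalFor G ↑S)
    (hmax : ∀ T : Finset (Sym2 V), IsStrongClique G ↑T → T.card ≤ S.card)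
    {u v : V} (huv : G.Adj u v) (hnS : s(u, v) ∉ S) :
    ∃ e ∈ S, ∀ a ∈ e, ∀ b ∈ s(u, v), a ≠ b ∧ ¬ G.Adj a b :=
  stmt6_general G S hmin hmax huv hnS
end

section
/- For every bipartite graph G, the strong clique number of G is at most Δ(G)², where Δ(G) is the maximum degree of G. -/
/-- `G` contains no cycle of length `n`. -/
def CycleFree {V : Type*} (G : SimpleGraph V) (n : ℕ) : Prop :=
  ∀ (v : V) (c : G.Walk v v), c.IsCycle → c.length ≠ n

/-!
Let `S` be a strong clique of a bipartite graph `G` with maximum degree `Δ`, and write `d_S(v)`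
for the number of edges of `S` at `v`. Let `a` maximise `d_S` on one colour class and `b` on the
other, and pick an edge `ac ∈ S`. The edges of `S` meeting `N(a)` number at most
`Δ · d_S(b)`. Every other edge of `S` has an endpoint `x ∈ N(c) \ {a}`, because it is joined
to `ac`. If `xy` is such an edge, the strong clique condition for `xy` and any `ao ∈ S`, together
with bipartiteness, forces `o ∈ N(x)`, while `y ∉ N(a)`; so `x` carries at most `Δ - d_S(a)` of
these edges. Hence `|S| ≤ Δ d_S(b) + (Δ - 1)(Δ - d_S(a))`, and adding this to the same bound with
the roles of `a` and `b` exchanged gives `2|S| ≤ 2Δ² - 2Δ + d_S(a) + d_S(b) ≤ 2Δ²`.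
-/

open Finset

section EdgeSets

variable {V : Type*} [Fintype V] [DecidableEq V]

def neighborsIn (T : Finset (Sym2 V)) (v : V) : Finset V := {w | s(v, w) ∈ T}

lemma mem_neighborsIn {T : Finset (Sym2 V)} {v w : V} :
    w ∈ neighborsIn T v ↔ s(v, w) ∈ T := by
  simp [neighborsIn]

lemma neighborsIn_mono {T T' : Finset (Sym2 V)} (h : T ⊆ T') (v : V) :
    neighborsIn T v ⊆ neighborsIn T' v :=
  fun _ hw => mem_neighborsIn.2 (h (mem_neighborsIn.1 hw))

lemma card_filter_mem_le_card_neighborsIn (T : Finset (Sym2 V)) (v : V) :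
    #{e ∈ T | v ∈ e} ≤ #(neighborsIn T v) := by
  refine (card_le_card fun e he => ?_).trans (card_image_le (f := fun w => s(v, w)))
  obtain ⟨heT, hv⟩ := mem_filter.1 he
  exact mem_image.2
    ⟨Sym2.Mem.other hv, mem_neighborsIn.2 ((Sym2.other_spec hv).symm ▸ heT), Sym2.other_spec hv⟩

lemma card_le_sum_card_neighborsIn {T : Finset (Sym2 V)} {U : Finset V}
    (hU : ∀ e ∈ T, ∃ u ∈ U, u ∈ e) : #T ≤ ∑ u ∈ U, #(neighborsIn T u) :=
  calc #T ≤ #(U.biUnion fun u => {e ∈ T | u ∈ e}) := card_le_card fun e he => by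
        obtain ⟨u, hu, hue⟩ := hU e he
        exact mem_biUnion.2 ⟨u, hu, mem_filter.2 ⟨he, hue⟩⟩
    _ ≤ ∑ u ∈ U, #{e ∈ T | u ∈ e} := card_biUnion_le
    _ ≤ ∑ u ∈ U, #(neighborsIn T u) :=
        sum_le_sum fun u _ => card_filter_mem_le_card_neighborsIn T u

variable {G : SimpleGraph V} [DecidableRel G.Adj]

lemma neighborsIn_subset_neighborFinset {T : Finset (Sym2 V)} (hT : ↑T ⊆ G.edgeSet) (v : V) :
    neighborsIn T v ⊆ G.neighborFinset v :=
  fun w hw => (G.mem_neighborFinset v w).2 (hT (mem_neighborsIn.1 hw))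

lemma card_neighborsIn_le_maxDegree {T : Finset (Sym2 V)} (hT : ↑T ⊆ G.edgeSet) (v : V) :
    #(neighborsIn T v) ≤ G.maxDegree :=
  calc #(neighborsIn T v) ≤ G.degree v := card_le_card (neighborsIn_subset_neighborFinset hT v)
    _ ≤ G.maxDegree := G.degree_le_maxDegree v

end EdgeSets

section StrongClique

variable {V : Type*} {G : SimpleGraph V}

lemma SimpleGraph.notMem_of_forall_not_adj {u : V} {e : Sym2 V} (he : e ∈ G.edgeSet)
    (hu : ∀ w ∈ e, ¬G.Adj u w) : u ∉ e := fun h =>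
  hu _ (Sym2.other_mem h) (by rwa [← G.mem_edgeSet, Sym2.other_spec])

lemma SimpleGraph.Coloring.eq_of_adj_of_adj (C : G.Coloring (Fin 2)) {u v w : V}
    (huv : G.Adj u v) (hvw : G.Adj v w) : C u = C w := by
  have := C.valid huv
  have := C.valid hvw
  omega

lemma IsStrongClique.exists_adj_of_forall_not_adj {S : Set (Sym2 V)} (hS : IsStrongClique G S)
    {u v : V} {e : Sym2 V} (huv : s(u, v) ∈ S) (he : e ∈ S) (hu : ∀ w ∈ e, ¬G.Adj u w) :
    ∃ w ∈ e, G.Adj v w := by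
  obtain ⟨x, w, hx, hw, hxw⟩ := hS.2 _ huv _ he
  rcases Sym2.mem_iff.1 hx with rfl | rfl
  · rcases hxw with rfl | hxw
    · exact absurd hw (G.notMem_of_forall_not_adj (hS.1 he) hu)
    · exact absurd hxw (hu w hw)
  · rcases hxw with rfl | hxw
    · exact absurd (hS.1 huv) (hu x hw)
    · exact ⟨w, hw, hxw⟩

variable [Fintype V] [DecidableEq V] [DecidableRel G.Adj] {S : Finset (Sym2 V)}

lemma IsStrongClique.card_neighborsIn_avoiding_le (hS : IsStrongClique G ↑S)
    (C : G.Coloring (Fin 2)) {a x : V} (hx : C x = C a) :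
    #(neighborsIn {e ∈ S | ∀ w ∈ e, ¬G.Adj a w} x) ≤ G.maxDegree - #(neighborsIn S a) := by
  set T := {e ∈ S | ∀ w ∈ e, ¬G.Adj a w}
  obtain hempty | ⟨y, hy⟩ := (neighborsIn T x).eq_empty_or_nonempty
  · simp [hempty]
  obtain ⟨hxyS, hxyT⟩ := mem_filter.1 (mem_neighborsIn.1 hy)
  have hT : neighborsIn T x ⊆ {w ∈ G.neighborFinset x | ¬G.Adj a w} := fun w hw => by
    obtain ⟨hwS, hwT⟩ := mem_filter.1 (mem_neighborsIn.1 hw)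
    exact mem_filter.2 ⟨(G.mem_neighborFinset x w).2 (hS.1 hwS), hwT w (Sym2.mem_mk_right x w)⟩
  have hS_a : neighborsIn S a ⊆ {w ∈ G.neighborFinset x | G.Adj a w} := fun o ho => by
    have hao : G.Adj a o := hS.1 (mem_neighborsIn.1 ho)
    obtain ⟨w, hw, how⟩ := hS.exists_adj_of_forall_not_adj (mem_neighborsIn.1 ho) hxyS hxyT
    rcases Sym2.mem_iff.1 hw with rfl | rfl
    · exact mem_filter.2 ⟨(G.mem_neighborFinset w o).2 how.symm, hao⟩
    · -- `o` and `w` both lie in the colour class opposite to `a` and `x`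
      have hxw : G.Adj x w := hS.1 hxyS
      have := C.valid how
      have := C.valid hao
      have := C.valid hxw
      omega
  have hsplit := card_filter_add_card_filter_not (s := G.neighborFinset x) (G.Adj a ·)
  have hdeg := G.degree_le_maxDegree x
  rw [G.card_neighborFinset_eq_degree] at hsplit
  have := card_le_card hT
  have := card_le_card hS_a
  omega

lemma IsStrongClique.card_le_of_forall_adj_le (hS : IsStrongClique G ↑S)
    (C : G.Coloring (Fin 2)) {a b : V} (ha : (neighborsIn S a).Nonempty)
    (hb : ∀ v, G.Adj a v → #(neighborsIn S v) ≤ #(neighborsIn S b)) :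
    #S ≤ G.maxDegree * #(neighborsIn S b)
      + (G.maxDegree - 1) * (G.maxDegree - #(neighborsIn S a)) := by
  obtain ⟨c, hc⟩ := ha
  have hac : s(a, c) ∈ S := mem_neighborsIn.1 hc
  rw [← card_filter_add_card_filter_not (s := S) (fun e => ∀ w ∈ e, ¬G.Adj a w), add_comm]
  gcongr ?_ + ?_
  · calc #{e ∈ S | ¬∀ w ∈ e, ¬G.Adj a w}
        ≤ ∑ v ∈ G.neighborFinset a, #(neighborsIn {e ∈ S | ¬∀ w ∈ e, ¬G.Adj a w} v) :=
          card_le_sum_card_neighborsIn fun e he => by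
            obtain ⟨w, hw, haw⟩ := not_forall₂.1 (mem_filter.1 he).2
            exact ⟨w, (G.mem_neighborFinset a w).2 (not_not.1 haw), hw⟩
      _ ≤ ∑ _v ∈ G.neighborFinset a, #(neighborsIn S b) := sum_le_sum fun v hv =>
          (card_le_card (neighborsIn_mono (filter_subset _ S) v)).trans
            (hb v ((G.mem_neighborFinset a v).1 hv))
      _ ≤ G.maxDegree * #(neighborsIn S b) := by
          rw [sum_const, smul_eq_mul, G.card_neighborFinset_eq_degree]
          gcongr
          exact G.degree_le_maxDegree a
  · calc #{e ∈ S | ∀ w ∈ e, ¬G.Adj a w}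
        ≤ ∑ x ∈ (G.neighborFinset c).erase a,
            #(neighborsIn {e ∈ S | ∀ w ∈ e, ¬G.Adj a w} x) :=
          card_le_sum_card_neighborsIn fun e he => by
            obtain ⟨heS, hae⟩ := mem_filter.1 he
            obtain ⟨x, hx, hcx⟩ := hS.exists_adj_of_forall_not_adj hac heS hae
            have hxa : x ≠ a := fun h => G.notMem_of_forall_not_adj (hS.1 heS) hae (h ▸ hx)
            exact ⟨x, mem_erase.2 ⟨hxa, (G.mem_neighborFinset c x).2 hcx⟩, hx⟩
      _ ≤ ∑ _x ∈ (G.neighborFinset c).erase a, (G.maxDegree - #(neighborsIn S a)) :=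
          sum_le_sum fun x hx => hS.card_neighborsIn_avoiding_le C <| .symm <|
            C.eq_of_adj_of_adj (hS.1 hac) ((G.mem_neighborFinset c x).1 (mem_of_mem_erase hx))
      _ ≤ (G.maxDegree - 1) * (G.maxDegree - #(neighborsIn S a)) := by
          rw [sum_const, smul_eq_mul,
            card_erase_of_mem ((G.mem_neighborFinset c a).2 (hS.1 hac).symm),
            G.card_neighborFinset_eq_degree]
          gcongr
          exact G.degree_le_maxDegree c

end StrongClique

lemma Nat.le_sq_of_le_mul_add_mul_sub {d A B n : ℕ} (hA : A ≤ d) (hB : B ≤ d)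
    (h₁ : n ≤ d * B + (d - 1) * (d - A)) (h₂ : n ≤ d * A + (d - 1) * (d - B)) :
    n ≤ d ^ 2 := by
  obtain rfl | hd := Nat.eq_zero_or_pos d
  · simpa using h₁
  zify [hA, hB, hd] at h₁ h₂ ⊢
  linarith

/-- For every bipartite graph `G`, the strong clique number of `G` is at most `Δ(G)²`. -/
theorem stmt7 {V : Type*} [Fintype V] [DecidableEq V] (G : SimpleGraph V)
    [DecidableRel G.Adj] (hbip : G.Colorable 2)
    (S : Finset (Sym2 V)) (hS : IsStrongClique G ↑S) :
    S.card ≤ G.maxDegree ^ 2 := by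
  obtain ⟨C⟩ := hbip
  obtain rfl | ⟨e₀, he₀⟩ := S.eq_empty_or_nonempty
  · simp
  induction e₀ using Sym2.ind with | h x₀ y₀ => ?_
  have hx₀y₀ := C.valid (hS.1 he₀)
  obtain ⟨a, ha, ha_max⟩ := exists_max_image {v | C v = C x₀} (fun v => #(neighborsIn S v))
    ⟨x₀, by simp⟩
  obtain ⟨b, hb, hb_max⟩ := exists_max_image {v | C v ≠ C x₀} (fun v => #(neighborsIn S v))
    ⟨y₀, by simpa using hx₀y₀.symm⟩
  simp only [mem_filter, mem_univ, true_and] at ha hb ha_max hb_max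
  have ha_pos : (neighborsIn S a).Nonempty := card_pos.1 <| lt_of_lt_of_le
    (card_pos.2 ⟨y₀, mem_neighborsIn.2 he₀⟩) (ha_max x₀ rfl)
  have hb_pos : (neighborsIn S b).Nonempty := card_pos.1 <| lt_of_lt_of_le
    (card_pos.2 ⟨x₀, mem_neighborsIn.2 (Sym2.eq_swap ▸ he₀)⟩) (hb_max y₀ hx₀y₀.symm)
  have hab := hS.card_le_of_forall_adj_le C ha_pos fun v hv => hb_max v <| by
    have := C.valid hv; omega
  have hba := hS.card_le_of_forall_adj_le C hb_pos fun v hv => ha_max v <| by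
    have := C.valid hv; omega
  exact Nat.le_sq_of_le_mul_add_mul_sub (card_neighborsIn_le_maxDegree hS.1 a)
    (card_neighborsIn_le_maxDegree hS.1 b) hab hba
end

section
/- If G is a C₄-free bipartite graph with maximum degree Δ(G) ≥ 1, then the strong clique number of G is at most 2Δ(G) − 1. -/
/-!
Orient each edge of the strong clique from colour class `0` to colour class `1`, turning it into a
pair `(a, b)`; two pairs `(a, b)`, `(p, q)` then satisfy `a = p`, `b = q`, `a ~ q` or `p ~ b`.
If any two pairs share a coordinate, all of them share the same one, so they form a star and
number at most `Δ`. Otherwise there are pairs `(u, v)`, `(x, y)` with `u ≠ x`, `v ≠ y` and `u ~ y`;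
excluding `C₄`, every pair `(a, b)` with `a ≠ u`, `b ≠ y` satisfies `a ~ v` and `x ~ b`.
If there is no such pair, the clique lies in the stars of `u` and `y`, which share the edge `uy`,
so it has at most `2Δ - 1` edges. If there is one, `(a₀, w)`, then excluding `C₄` once more, every
pair other than `(u, v)` and `(x, y)` is `(a, w)` with `a ≠ x`, and since `w` has the two
neighbours `x` and `a₀` this leaves at most `(Δ - 1) + 2 ≤ 2Δ - 1` edges.
-/

open Finset SimpleGraph

theorem forall_fst_eq_or_forall_snd_eq {α β : Type*} {P : Set (α × β)}
    (h : ∀ p ∈ P, ∀ q ∈ P, p.1 = q.1 ∨ p.2 = q.2) {p₀ : α × β} (hp₀ : p₀ ∈ P) :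
    (∀ p ∈ P, p.1 = p₀.1) ∨ ∀ p ∈ P, p.2 = p₀.2 := by
  by_contra! ⟨⟨p, hp, hp₁⟩, ⟨q, hq, hq₂⟩⟩
  have hp₂ : p.2 = p₀.2 := (h p hp p₀ hp₀).resolve_left hp₁
  have hq₁ : q.1 = p₀.1 := (h q hq p₀ hp₀).resolve_right hq₂
  rcases h p hp q hq with h₁ | h₂
  · exact hp₁ (h₁.trans hq₁)
  · exact hq₂ (h₂ ▸ hp₂)

theorem CycleFree.false_of_square {V : Type*} {G : SimpleGraph V} (hc4 : CycleFree G 4)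
    {p q r s : V} (hpq : G.Adj p q) (hqr : G.Adj q r) (hrs : G.Adj r s) (hsp : G.Adj s p)
    (hpr : p ≠ r) (hqs : q ≠ s) : False := by
  apply hc4 p (.cons hpq (.cons hqr (.cons hrs (.cons hsp .nil))))
  · refine ⟨⟨?_, by simp⟩, ?_⟩
    · simp [hpq.ne, hpq.ne', hqr.ne, hrs.ne, hsp.ne, hsp.ne', hpr, hpr.symm, hqs]
    · simp [hpq.ne', hqr.ne, hrs.ne, hsp.ne, hpr.symm, hqs]
  · simp

/-- The edges of a strong clique of a bipartite graph, each written as a pair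
(end in the first colour class, end in the second). -/
structure IsOrientedStrongClique {V : Type*} (G : SimpleGraph V) (P : Set (V × V)) : Prop where
  adj : ∀ ⦃a b⦄, (a, b) ∈ P → G.Adj a b
  meet : ∀ ⦃a b p q⦄, (a, b) ∈ P → (p, q) ∈ P → a = p ∨ b = q ∨ G.Adj a q ∨ G.Adj p b

section Orientation

variable {V : Type*} [Fintype V] [DecidableEq V] {G : SimpleGraph V} (C : G.Coloring (Fin 2))
  {S : Finset (Sym2 V)}

def orientedEdges (S : Finset (Sym2 V)) : Finset (V × V) :=
  {p : V × V | s(p.1, p.2) ∈ S ∧ C p.1 = 0 ∧ C p.2 = 1}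

@[simp]
theorem mem_orientedEdges {a b : V} :
    (a, b) ∈ orientedEdges C S ↔ s(a, b) ∈ S ∧ C a = 0 ∧ C b = 1 := by
  simp [orientedEdges]

theorem IsStrongClique.isOrientedStrongClique_orientedEdges (hS : IsStrongClique G ↑S) :
    IsOrientedStrongClique G ↑(orientedEdges C S) := by
  refine ⟨fun a b hab => hS.1 ((mem_orientedEdges C).1 hab).1, fun a b p q hab hpq => ?_⟩
  obtain ⟨habS, ha, hb⟩ := (mem_orientedEdges C).1 hab
  obtain ⟨hpqS, hp, hq⟩ := (mem_orientedEdges C).1 hpq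
  obtain ⟨r, t, hr, ht, hrt⟩ := hS.2 _ habS _ hpqS
  have hsame : ∀ ⦃r t⦄, C r = C t → ¬ G.Adj r t := fun r t h hrt => C.valid hrt h
  rw [Sym2.mem_iff] at hr ht
  -- a shared vertex or a joining edge cannot lie inside one colour class
  grind [SimpleGraph.adj_comm]

theorem IsStrongClique.card_le_card_orientedEdges (hS : IsStrongClique G ↑S) :
    #S ≤ #(orientedEdges C S) := by
  suffices S ⊆ (orientedEdges C S).image fun p => s(p.1, p.2) from
    (card_le_card this).trans card_image_le
  intro e he
  induction e using Sym2.ind with | _ a b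
  have hC : C a ≠ C b := C.valid (hS.1 he)
  simp only [orientedEdges, mem_image, mem_filter, mem_univ, true_and, Prod.exists]
  rcases (by omega : C a = 0 ∧ C b = 1 ∨ C b = 0 ∧ C a = 1) with hcol | hcol
  · exact ⟨a, b, ⟨he, hcol⟩, rfl⟩
  · exact ⟨b, a, ⟨Sym2.eq_swap ▸ he, hcol⟩, Sym2.eq_swap⟩

end Orientation

section Crossing

variable {V : Type*} {G : SimpleGraph V} {P : Set (V × V)} {u v x y a b : V}

theorem IsOrientedStrongClique.adj_of_ne_of_ne (hP : IsOrientedStrongClique G P)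
    (hc4 : CycleFree G 4) (huv : (u, v) ∈ P) (hxy : (x, y) ∈ P) (hux : u ≠ x) (hvy : v ≠ y)
    (huy : G.Adj u y) (hab : (a, b) ∈ P) (hau : a ≠ u) (hby : b ≠ y) :
    G.Adj a v ∧ G.Adj x b ∧ a ≠ x := by
  have hnxv : ¬ G.Adj x v := fun h =>
    hc4.false_of_square (hP.adj huv) h.symm (hP.adj hxy) huy.symm hux hvy
  have hav : G.Adj a v := by
    rcases hP.meet hab huv with h | h | h | hub
    · exact absurd h hau
    · exact h ▸ hP.adj hab
    · exact h
    · exfalso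
      rcases hP.meet hab hxy with h | h | h | h
      · exact hc4.false_of_square hub (h ▸ hP.adj hab).symm (hP.adj hxy) huy.symm hux hby
      · exact hby h
      · exact hc4.false_of_square hub (hP.adj hab).symm h huy.symm hau.symm hby
      · exact hc4.false_of_square hub h.symm (hP.adj hxy) huy.symm hux hby
  have hax : a ≠ x := by rintro rfl; exact hnxv hav
  refine ⟨hav, ?_, hax⟩
  rcases hP.meet hab hxy with h | h | h | h
  · exact absurd h hax
  · exact absurd h hby
  · exact (hc4.false_of_square (hP.adj huv) hav.symm h huy.symm hau.symm hvy).elim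
  · exact h

theorem IsOrientedStrongClique.eq_or_eq_or_snd_eq (hP : IsOrientedStrongClique G P)
    (hc4 : CycleFree G 4) (huv : (u, v) ∈ P) (hxy : (x, y) ∈ P) (hux : u ≠ x) (hvy : v ≠ y)
    (huy : G.Adj u y) {a₀ w : V} (ha₀w : (a₀, w) ∈ P) (ha₀u : a₀ ≠ u) (hwy : w ≠ y)
    (hab : (a, b) ∈ P) : (a, b) = (u, v) ∨ (a, b) = (x, y) ∨ a ≠ x ∧ b = w := by
  obtain ⟨ha₀v, hxw, ha₀x⟩ := hP.adj_of_ne_of_ne hc4 huv hxy hux hvy huy ha₀w ha₀u hwy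
  have hwv : w ≠ v := by
    rintro rfl
    exact hc4.false_of_square (hP.adj huv) hxw.symm (hP.adj hxy) huy.symm hux hvy
  have hnuw : ¬ G.Adj u w := fun h =>
    hc4.false_of_square h hxw.symm (hP.adj hxy) huy.symm hux hwy
  have hna₀y : ¬ G.Adj a₀ y := fun h =>
    hc4.false_of_square (hP.adj huv) ha₀v.symm h huy.symm ha₀u.symm hvy
  have h_u : ∀ {b}, (u, b) ∈ P → b = v := fun {b} hub => by
    by_contra hbv
    rcases hP.meet hub ha₀w with h | h | h | h
    · exact ha₀u h.symm
    · exact hnuw (h ▸ hP.adj hub)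
    · exact hnuw h
    · exact hc4.false_of_square (hP.adj hub) h.symm ha₀v (hP.adj huv).symm ha₀u.symm hbv
  have h_y : ∀ {a}, (a, y) ∈ P → a = x := fun {a} hay => by
    by_contra hax
    rcases hP.meet hay ha₀w with h | h | h | h
    · exact hna₀y (h ▸ hP.adj hay)
    · exact hwy h.symm
    · exact hc4.false_of_square h hxw.symm (hP.adj hxy) (hP.adj hay).symm hax hwy
    · exact hna₀y h
  rcases eq_or_ne a u with rfl | hau
  · exact Or.inl (by rw [h_u hab])
  rcases eq_or_ne b y with rfl | hby
  · exact Or.inr (Or.inl (by rw [h_y hab]))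
  obtain ⟨hav, hxb, hax⟩ := hP.adj_of_ne_of_ne hc4 huv hxy hux hvy huy hab hau hby
  refine Or.inr (Or.inr ⟨hax, ?_⟩)
  by_contra hbw
  have hna₀b : ¬ G.Adj a₀ b := fun h =>
    hc4.false_of_square hxb h.symm (hP.adj ha₀w) hxw.symm ha₀x.symm hbw
  rcases hP.meet hab ha₀w with h | h | h | h
  · exact hna₀b (h ▸ hP.adj hab)
  · exact hbw h
  · rcases eq_or_ne a a₀ with rfl | haa₀
    · exact hna₀b (hP.adj hab)
    · exact hc4.false_of_square h (hP.adj ha₀w).symm ha₀v hav.symm haa₀ hwv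
  · exact hna₀b h

end Crossing

section Counting

variable {V : Type*} [Fintype V] {G : SimpleGraph V} [DecidableRel G.Adj] {P : Finset (V × V)}

theorem IsOrientedStrongClique.card_le_maxDegree (hP : IsOrientedStrongClique G ↑P)
    (hmeet : ∀ p ∈ P, ∀ q ∈ P, p.1 = q.1 ∨ p.2 = q.2) : #P ≤ G.maxDegree := by
  obtain rfl | ⟨⟨a, b⟩, hab⟩ := P.eq_empty_or_nonempty
  · simp
  rcases forall_fst_eq_or_forall_snd_eq hmeet hab with hrow | hcol
  · have hsub : P ⊆ {a} ×ˢ G.neighborFinset a := by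
      rintro ⟨p, q⟩ hpq
      obtain rfl : p = a := hrow _ hpq
      simp [hP.adj hpq]
    calc #P ≤ #({a} ×ˢ G.neighborFinset a) := card_le_card hsub
      _ = G.degree a := by simp
      _ ≤ G.maxDegree := G.degree_le_maxDegree a
  · have hsub : P ⊆ G.neighborFinset b ×ˢ {b} := by
      rintro ⟨p, q⟩ hpq
      obtain rfl : q = b := hcol _ hpq
      simp [(hP.adj hpq).symm]
    calc #P ≤ #(G.neighborFinset b ×ˢ {b}) := card_le_card hsub
      _ = G.degree b := by simp
      _ ≤ G.maxDegree := G.degree_le_maxDegree b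

variable [DecidableEq V] {u v x y : V}

theorem card_add_one_le_degree_add_degree (hadj : ∀ ⦃a b⦄, (a, b) ∈ P → G.Adj a b)
    (huy : G.Adj u y) (hP : ∀ ⦃a b⦄, (a, b) ∈ P → a = u ∨ b = y) :
    #P + 1 ≤ G.degree u + G.degree y := by
  set R := {u} ×ˢ G.neighborFinset u
  set T := G.neighborFinset y ×ˢ {y}
  have hsub : P ⊆ R ∪ T := by
    rintro ⟨a, b⟩ hab
    rcases hP hab with rfl | rfl
    · simp [R, hadj hab]
    · simp [T, (hadj hab).symm]
  have huyRT : (u, y) ∈ R ∩ T := by simp [R, T, huy, huy.symm]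
  calc #P + 1 ≤ #(R ∪ T) + #(R ∩ T) := add_le_add (card_le_card hsub) (card_pos.2 ⟨_, huyRT⟩)
    _ = G.degree u + G.degree y := by rw [card_union_add_card_inter]; simp [R, T]

theorem card_le_degree_add_one (hadj : ∀ ⦃a b⦄, (a, b) ∈ P → G.Adj a b) {w : V}
    (hxw : G.Adj x w)
    (hP : ∀ ⦃a b⦄, (a, b) ∈ P → (a, b) = (u, v) ∨ (a, b) = (x, y) ∨ a ≠ x ∧ b = w) :
    #P ≤ G.degree w + 1 := by
  have hsub : P ⊆ {(u, v), (x, y)} ∪ (G.neighborFinset w).erase x ×ˢ {w} := by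
    rintro ⟨a, b⟩ hab
    rcases hP hab with h | h | ⟨hax, rfl⟩
    · simp [h]
    · simp [h]
    · simp [hax, (hadj hab).symm]
  have hx : x ∈ G.neighborFinset w := by simpa using hxw.symm
  calc #P ≤ #{(u, v), (x, y)} + #((G.neighborFinset w).erase x ×ˢ {w}) :=
        (card_le_card hsub).trans (card_union_le _ _)
    _ ≤ 2 + (G.degree w - 1) := by
        gcongr
        · exact card_le_two
        · rw [card_product, card_erase_of_mem hx, card_singleton, mul_one,
            card_neighborFinset_eq_degree]
    _ = G.degree w + 1 := by
        have : 0 < G.degree w := by simpa using card_pos.2 ⟨x, hx⟩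
        omega

theorem IsOrientedStrongClique.card_add_one_le_of_adj (hP : IsOrientedStrongClique G ↑P)
    (hc4 : CycleFree G 4) (huv : (u, v) ∈ P) (hxy : (x, y) ∈ P) (hux : u ≠ x) (hvy : v ≠ y)
    (huy : G.Adj u y) : #P + 1 ≤ 2 * G.maxDegree := by
  by_cases hmid : ∃ a₀ w, (a₀, w) ∈ P ∧ a₀ ≠ u ∧ w ≠ y
  · obtain ⟨a₀, w, ha₀w, ha₀u, hwy⟩ := hmid
    obtain ⟨-, hxw, ha₀x⟩ := hP.adj_of_ne_of_ne hc4 huv hxy hux hvy huy ha₀w ha₀u hwy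
    have hcard := card_le_degree_add_one hP.adj hxw fun a b hab =>
      hP.eq_or_eq_or_snd_eq hc4 huv hxy hux hvy huy ha₀w ha₀u hwy hab
    have hdeg : 2 ≤ G.degree w := by
      rw [← card_neighborFinset_eq_degree]
      exact one_lt_card.2 ⟨x, by simpa using hxw.symm, a₀, by simpa using (hP.adj ha₀w).symm,
        ha₀x.symm⟩
    have := G.degree_le_maxDegree w
    omega
  · push Not at hmid
    have hcard := card_add_one_le_degree_add_degree hP.adj huy fun a b hab =>
      (eq_or_ne a u).imp_right fun hau => hmid a b hab hau
    have := G.degree_le_maxDegree u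
    have := G.degree_le_maxDegree y
    omega

theorem IsOrientedStrongClique.card_add_one_le_two_mul_maxDegree
    (hP : IsOrientedStrongClique G ↑P) (hc4 : CycleFree G 4) (hΔ : 1 ≤ G.maxDegree) :
    #P + 1 ≤ 2 * G.maxDegree := by
  by_cases hmeet : ∀ p ∈ P, ∀ q ∈ P, p.1 = q.1 ∨ p.2 = q.2
  · have := hP.card_le_maxDegree hmeet
    omega
  push Not at hmeet
  obtain ⟨⟨u, v⟩, huv, ⟨x, y⟩, hxy, hux, hvy⟩ := hmeet
  rcases hP.meet huv hxy with h | h | huy | hxv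
  · exact absurd h hux
  · exact absurd h hvy
  · exact hP.card_add_one_le_of_adj hc4 huv hxy hux hvy huy
  · exact hP.card_add_one_le_of_adj hc4 hxy huv hux.symm hvy.symm hxv

end Counting

/-- If `G` is a `C₄`-free bipartite graph with `Δ(G) ≥ 1`, then the strong clique number
of `G` is at most `2Δ(G) - 1`. -/
theorem stmt8 {V : Type*} [Fintype V] [DecidableEq V] (G : SimpleGraph V)
    [DecidableRel G.Adj] (hbip : G.Colorable 2) (hc4 : CycleFree G 4)
    (hΔ : 1 ≤ G.maxDegree)
    (S : Finset (Sym2 V)) (hS : IsStrongClique G ↑S) :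
    (S.card : ℤ) ≤ 2 * G.maxDegree - 1 := by
  obtain ⟨C⟩ := hbip
  have hcard := hS.card_le_card_orientedEdges C
  have hP := (hS.isOrientedStrongClique_orientedEdges C).card_add_one_le_two_mul_maxDegree hc4 hΔ
  omega
end

section
/- Let G be a C₅-free graph with Δ(G) ≥ 1 and let H be the subgraph of G induced by a maximum strong clique of G. If H contains a triangle, then the strong clique number of G is at most 4Δ(G) − 3. -/
/-!
Let `abc` be a triangle of the maximum strong clique `S`. The edges of `S` meeting the triangle
are at most `deg a + deg b + deg c - 3 ≤ 3Δ - 3`, since the three triangle edges are each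
counted twice. For an edge `xy` of `S` avoiding the triangle, `C₅`-freeness forbids `x` and `y`
to have distinct neighbours on the triangle (they would close a 5-cycle through the third
vertex), while `xy` must see all three triangle edges. Hence one endpoint is *heavy* (two
neighbours on the triangle) and the other *light* (none). Again by `C₅`-freeness, two such
edges share their heavy or their light endpoint, so all of them pass through one vertex and
there are at most `Δ` of them.
-/

open Finset SimpleGraph

namespace Finset

variable {α : Type*}

theorem card_le_card_filter_add_one {s : Finset α} {p : α → Prop} [DecidablePred p]
    (h : ∀ a ∈ s, ∀ b ∈ s, a ≠ b → p a ∨ p b) : #s ≤ #{a ∈ s | p a} + 1 := by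
  have hnot : #{a ∈ s | ¬p a} ≤ 1 := card_le_one.2 fun a ha b hb => by
    rw [mem_filter] at ha hb
    by_contra hab
    exact (h a ha.1 b hb.1 hab).elim ha.2 hb.2
  rw [← card_filter_add_card_filter_not (s := s) p]
  exact Nat.add_le_add_left hnot _

theorem exists_mem_ne_ne_of_two_lt_card {s : Finset α} (hs : 2 < #s) (a b : α) :
    ∃ c ∈ s, c ≠ a ∧ c ≠ b := by
  classical
  have := pred_card_le_card_erase (s := s) (a := a)
  obtain ⟨c, hc, hcb⟩ := exists_mem_ne (s := s.erase a) (by omega) b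
  exact ⟨c, mem_of_mem_erase hc, ne_of_mem_erase hc, hcb⟩

theorem exists_mem_mem_ne {s t : Finset α} (hs : s.Nonempty) (ht : 1 < #t) :
    ∃ a ∈ s, ∃ b ∈ t, a ≠ b := by
  obtain ⟨a, ha⟩ := hs
  obtain ⟨b, hb, hba⟩ := exists_mem_ne ht a
  exact ⟨a, ha, b, hb, hba.symm⟩

end Finset

theorem forall_fst_eq_or_forall_snd_eq_s11 {α β : Type*} {R : α → β → Prop}
    (hR : ∀ ⦃x y x' y'⦄, R x y → R x' y' → x = x' ∨ y = y') {x₀ : α} {y₀ : β}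
    (h₀ : R x₀ y₀) : (∀ x y, R x y → x = x₀) ∨ (∀ x y, R x y → y = y₀) := by
  by_contra! h
  obtain ⟨⟨x₁, y₁, h₁, hx₁⟩, ⟨x₂, y₂, h₂, hy₂⟩⟩ := h
  have hy₁ : y₁ = y₀ := (hR h₁ h₀).resolve_left hx₁
  have hx₂ : x₂ = x₀ := (hR h₂ h₀).resolve_right hy₂
  rcases hR h₁ h₂ with h | h
  · exact hx₁ (h.trans hx₂)
  · exact hy₂ (h.symm.trans hy₁)

theorem CycleFree.false_of_five_cycle {V : Type*} {G : SimpleGraph V} (hc5 : CycleFree G 5)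
    {v₀ v₁ v₂ v₃ v₄ : V} (h01 : G.Adj v₀ v₁) (h12 : G.Adj v₁ v₂) (h23 : G.Adj v₂ v₃)
    (h34 : G.Adj v₃ v₄) (h40 : G.Adj v₄ v₀)
    (h02 : v₀ ≠ v₂) (h03 : v₀ ≠ v₃) (h13 : v₁ ≠ v₃) (h14 : v₁ ≠ v₄) (h24 : v₂ ≠ v₄) : False := by
  refine hc5 v₀ (.cons h01 (.cons h12 (.cons h23 (.cons h34 (.cons h40 .nil))))) ?_ rfl
  have := h01.ne; have := h12.ne; have := h23.ne; have := h34.ne; have := h40.ne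
  refine ⟨⟨⟨?_⟩, by simp⟩, ?_⟩
  · simp [SimpleGraph.Walk.edges]
    aesop
  · simp
    aesop

section Triangle

variable {V : Type*} {G : SimpleGraph V} {T : Finset V}

theorem CycleFree.eq_of_adj_of_adj (hc5 : CycleFree G 5)
    (hT : G.IsNClique 3 T) {x y u v : V} (hxy : G.Adj x y) (hx : x ∉ T) (hy : y ∉ T)
    (hu : u ∈ T) (hv : v ∈ T) (hxu : G.Adj x u) (hyv : G.Adj y v) : u = v := by
  by_contra huv
  obtain ⟨w, hw, hwv, hwu⟩ := exists_mem_ne_ne_of_two_lt_card (by rw [hT.card_eq]; norm_num) v u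
  exact hc5.false_of_five_cycle hxy hyv (hT.isClique hv hw hwv.symm) (hT.isClique hw hu hwu)
    hxu.symm (ne_of_mem_of_not_mem hv hx).symm (ne_of_mem_of_not_mem hw hx).symm
    (ne_of_mem_of_not_mem hw hy).symm (ne_of_mem_of_not_mem hu hy).symm (Ne.symm huv)

theorem CycleFree.heavy_light [DecidableRel G.Adj] (hc5 : CycleFree G 5) (hT : G.IsNClique 3 T)
    {x y : V} (hxy : G.Adj x y) (hx : x ∉ T) (hy : y ∉ T)
    (hsee : ∀ u ∈ T, ∀ v ∈ T, u ≠ v → (G.Adj x u ∨ G.Adj y u) ∨ (G.Adj x v ∨ G.Adj y v)) :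
    (2 ≤ #{u ∈ T | G.Adj x u} ∧ ∀ u ∈ T, ¬G.Adj y u) ∨
      (2 ≤ #{u ∈ T | G.Adj y u} ∧ ∀ u ∈ T, ¬G.Adj x u) := by
  have hseen : 2 ≤ #{u ∈ T | G.Adj x u ∨ G.Adj y u} := by
    have := card_le_card_filter_add_one hsee
    rw [hT.card_eq] at this
    omega
  by_cases hyT : ∀ u ∈ T, ¬G.Adj y u
  · refine .inl ⟨?_, hyT⟩
    rwa [filter_congr fun u hu => or_iff_left (hyT u hu)] at hseen
  by_cases hxT : ∀ u ∈ T, ¬G.Adj x u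
  · refine .inr ⟨?_, hxT⟩
    rwa [filter_congr fun u hu => or_iff_right (hxT u hu)] at hseen
  push Not at hxT hyT
  obtain ⟨u, hu, hxu⟩ := hxT
  obtain ⟨v, hv, hyv⟩ := hyT
  have huv := hc5.eq_of_adj_of_adj hT hxy hx hy hu hv hxu hyv
  have honly : ∀ w ∈ {u ∈ T | G.Adj x u ∨ G.Adj y u}, w = u := by
    intro w hw
    obtain ⟨hw, hxw | hyw⟩ := mem_filter.1 hw
    · exact (hc5.eq_of_adj_of_adj hT hxy hx hy hw hv hxw hyv).trans huv.symm
    · exact (hc5.eq_of_adj_of_adj hT hxy hx hy hu hw hxu hyw).symm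
  have := card_le_one.2 fun a ha b hb => (honly a ha).trans (honly b hb).symm
  omega

theorem CycleFree.not_adj_of_two_le_card [DecidableRel G.Adj] (hc5 : CycleFree G 5)
    (hT : G.IsNClique 3 T) {x x' y' : V} (hxx' : x ≠ x') (hx : x ∉ T) (hx' : x' ∉ T)
    (hy' : y' ∉ T) (hxT : 2 ≤ #{u ∈ T | G.Adj x u}) (hx'T : 2 ≤ #{u ∈ T | G.Adj x' u})
    (hx'y' : G.Adj x' y') : ¬G.Adj x y' := by
  intro hxy'
  obtain ⟨u, hu, v, hv, huv⟩ := exists_mem_mem_ne (s := {u ∈ T | G.Adj x u})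
    (t := {u ∈ T | G.Adj x' u}) (card_pos.1 (by omega)) (by omega)
  rw [mem_filter] at hu hv
  exact hc5.false_of_five_cycle hu.2.symm hxy' hx'y'.symm hv.2 (hT.isClique hv.1 hu.1 huv.symm)
    (ne_of_mem_of_not_mem hu.1 hy') (ne_of_mem_of_not_mem hu.1 hx') hxx'
    (ne_of_mem_of_not_mem hv.1 hx).symm (ne_of_mem_of_not_mem hv.1 hy').symm

def IsHeavyLight (G : SimpleGraph V) [DecidableRel G.Adj] (S : Finset (Sym2 V)) (T : Finset V)
    (x y : V) : Prop :=
  s(x, y) ∈ S ∧ x ∉ T ∧ y ∉ T ∧ 2 ≤ #{u ∈ T | G.Adj x u} ∧ ∀ u ∈ T, ¬G.Adj y u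

theorem IsStrongClique.adj_of_ne {S : Set (Sym2 V)} (hS : IsStrongClique G S) {x y u v : V}
    (he : s(x, y) ∈ S) (hf : s(u, v) ∈ S) (hxu : x ≠ u) (hxv : x ≠ v) (hyu : y ≠ u)
    (hyv : y ≠ v) : (G.Adj x u ∨ G.Adj y u) ∨ (G.Adj x v ∨ G.Adj y v) := by
  obtain ⟨p, q, hp, hq, hpq⟩ := hS.2 _ he _ hf
  rw [Sym2.mem_iff] at hp hq
  rcases hp with rfl | rfl <;> rcases hq with rfl | rfl
  · exact .inl (.inl (hpq.resolve_left hxu))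
  · exact .inr (.inl (hpq.resolve_left hxv))
  · exact .inl (.inr (hpq.resolve_left hyu))
  · exact .inr (.inr (hpq.resolve_left hyv))

variable [DecidableRel G.Adj] {S : Finset (Sym2 V)}

theorem CycleFree.exists_isHeavyLight (hc5 : CycleFree G 5) (hS : IsStrongClique G ↑S)
    (hT : G.IsNClique 3 T) (hTS : ∀ u ∈ T, ∀ v ∈ T, u ≠ v → s(u, v) ∈ S) {e : Sym2 V}
    (he : e ∈ S) (heT : ∀ v ∈ T, v ∉ e) : ∃ x y, e = s(x, y) ∧ IsHeavyLight G S T x y := by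
  induction e using Sym2.ind with
  | _ x y =>
  have hx : x ∉ T := fun h => heT x h (Sym2.mem_mk_left x y)
  have hy : y ∉ T := fun h => heT y h (Sym2.mem_mk_right x y)
  have hxy : G.Adj x y := hS.1 he
  have hsee u (hu : u ∈ T) v (hv : v ∈ T) (huv : u ≠ v) :=
    hS.adj_of_ne he (hTS u hu v hv huv) (ne_of_mem_of_not_mem hu hx).symm
      (ne_of_mem_of_not_mem hv hx).symm (ne_of_mem_of_not_mem hu hy).symm
      (ne_of_mem_of_not_mem hv hy).symm
  rcases hc5.heavy_light hT hxy hx hy hsee with ⟨hxT, hyT⟩ | ⟨hyT, hxT⟩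
  · exact ⟨x, y, rfl, he, hx, hy, hxT, hyT⟩
  · exact ⟨y, x, Sym2.eq_swap, Sym2.eq_swap ▸ he, hy, hx, hyT, hxT⟩

theorem IsHeavyLight.eq_or_eq (hc5 : CycleFree G 5) (hS : IsStrongClique G ↑S)
    (hT : G.IsNClique 3 T) {x y x' y' : V} (h : IsHeavyLight G S T x y)
    (h' : IsHeavyLight G S T x' y') : x = x' ∨ y = y' := by
  classical
  obtain ⟨he, hx, hy, hxT, hyT⟩ := h
  obtain ⟨he', hx', hy', hx'T, hy'T⟩ := h'
  have hxy : G.Adj x y := hS.1 he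
  have hx'y' : G.Adj x' y' := hS.1 he'
  have heavy_ne_light {a b : V} (ha : 2 ≤ #{u ∈ T | G.Adj a u}) (hb : ∀ u ∈ T, ¬G.Adj b u) :
      a ≠ b := by
    rintro rfl
    obtain ⟨u, hu⟩ := card_pos.1 (by omega : 0 < #{u ∈ T | G.Adj a u})
    exact hb u (mem_filter.1 hu).1 (mem_filter.1 hu).2
  by_contra! hne
  obtain ⟨hxx', hyy'⟩ := hne
  obtain ⟨p, q, hp, hq, hpq⟩ := hS.2 _ he _ he'
  rw [Sym2.mem_iff] at hp hq
  rcases hp with hp | hp <;> rcases hq with hq | hq <;> subst p q <;> rcases hpq with hpq | hpq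
  · exact hxx' hpq
  · obtain ⟨u, hu, v, hv, huv⟩ := exists_mem_mem_ne (s := {u ∈ T | G.Adj x u})
      (t := {u ∈ T | G.Adj x' u}) (card_pos.1 (by omega)) (by omega)
    rw [mem_filter] at hu hv
    exact huv (hc5.eq_of_adj_of_adj hT hpq hx hx' hu.1 hv.1 hu.2 hv.2)
  · exact heavy_ne_light hxT hy'T hpq
  · exact hc5.not_adj_of_two_le_card hT hxx' hx hx' hy' hxT hx'T hx'y' hpq
  · exact heavy_ne_light hx'T hyT hpq.symm
  · exact hc5.not_adj_of_two_le_card hT hxx'.symm hx' hx hy hx'T hxT hxy hpq.symm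
  · exact hyy' hpq
  · -- two sets of two neighbours in a triangle meet
    obtain ⟨w, hw⟩ := inter_nonempty_of_card_lt_card_add_card (filter_subset _ T)
      (filter_subset _ T) (by rw [hT.card_eq]; omega :
        #T < #{u ∈ T | G.Adj x u} + #{u ∈ T | G.Adj x' u})
    simp only [mem_inter, mem_filter] at hw
    exact hc5.false_of_five_cycle hxy.symm hw.1.2 hw.2.2.symm hx'y' hpq.symm
      (ne_of_mem_of_not_mem hw.1.1 hy).symm (heavy_ne_light hx'T hyT).symm hxx'
      (heavy_ne_light hxT hy'T) (ne_of_mem_of_not_mem hw.1.1 hy')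

theorem CycleFree.card_filter_forall_not_mem_le_maxDegree [Fintype V] [DecidableEq V]
    (hc5 : CycleFree G 5) (hS : IsStrongClique G ↑S) (hT : G.IsNClique 3 T)
    (hTS : ∀ u ∈ T, ∀ v ∈ T, u ≠ v → s(u, v) ∈ S) :
    #{e ∈ S | ∀ v ∈ T, v ∉ e} ≤ G.maxDegree := by
  obtain hB | ⟨e₀, he₀⟩ := eq_empty_or_nonempty {e ∈ S | ∀ v ∈ T, v ∉ e}
  · simp [hB]
  have horient {e : Sym2 V} (he : e ∈ {e ∈ S | ∀ v ∈ T, v ∉ e}) :=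
    hc5.exists_isHeavyLight hS hT hTS (mem_filter.1 he).1 (mem_filter.1 he).2
  obtain ⟨x₀, y₀, -, h₀⟩ := horient he₀
  have hstar : ∃ z, ∀ e ∈ {e ∈ S | ∀ v ∈ T, v ∉ e}, z ∈ e := by
    rcases forall_fst_eq_or_forall_snd_eq_s11 (fun _ _ _ _ h h' => h.eq_or_eq hc5 hS hT h') h₀
      with hx₀ | hy₀
    · refine ⟨x₀, fun e he => ?_⟩
      obtain ⟨x, y, rfl, hxy⟩ := horient he
      exact hx₀ x y hxy ▸ Sym2.mem_mk_left x y
    · refine ⟨y₀, fun e he => ?_⟩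
      obtain ⟨x, y, rfl, hxy⟩ := horient he
      exact hy₀ x y hxy ▸ Sym2.mem_mk_right x y
  obtain ⟨z, hz⟩ := hstar
  calc #{e ∈ S | ∀ v ∈ T, v ∉ e}
    _ ≤ #(G.incidenceFinset z) := card_le_card fun e he =>
        G.mem_incidenceFinset z e |>.2 ⟨hS.1 (mem_filter.1 he).1, hz e he⟩
    _ = G.degree z := G.card_incidenceFinset_eq_degree z
    _ ≤ G.maxDegree := G.degree_le_maxDegree z

theorem SimpleGraph.card_incidenceFinset_union_add_three_le [Fintype V] [DecidableEq V]
    {a b c : V} (hab : G.Adj a b) (hbc : G.Adj b c) (hac : G.Adj a c) :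
    #(G.incidenceFinset a ∪ G.incidenceFinset b ∪ G.incidenceFinset c) + 3 ≤
      G.degree a + G.degree b + G.degree c := by
  have hab' : s(a, b) ∈ G.incidenceFinset a ∩ G.incidenceFinset b := by
    simp [mem_incidenceFinset, incidenceSet, hab]
  have hc' : {s(a, c), s(b, c)} ⊆ (G.incidenceFinset a ∪ G.incidenceFinset b) ∩
      G.incidenceFinset c := by
    simp [insert_subset_iff, mem_incidenceFinset, incidenceSet, hac, hbc]
  have hac_ne_bc : s(a, c) ≠ s(b, c) := by
    rw [Ne, Sym2.eq_iff]
    rintro (⟨h, -⟩ | ⟨h, -⟩)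
    exacts [hab.ne h, hac.ne h]
  have := card_le_card hc'
  rw [card_pair hac_ne_bc] at this
  have := card_pos.2 ⟨_, hab'⟩
  have := card_union_add_card_inter (G.incidenceFinset a) (G.incidenceFinset b)
  have := card_union_add_card_inter (G.incidenceFinset a ∪ G.incidenceFinset b)
    (G.incidenceFinset c)
  rw [← G.card_incidenceFinset_eq_degree a, ← G.card_incidenceFinset_eq_degree b,
    ← G.card_incidenceFinset_eq_degree c]
  omega

theorem IsStrongClique.card_add_three_le [Fintype V] [DecidableEq V]
    (hS : IsStrongClique G ↑S) (hc5 : CycleFree G 5) {a b c : V} (hab : s(a, b) ∈ S)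
    (hbc : s(b, c) ∈ S) (hac : s(a, c) ∈ S) : #S + 3 ≤ 4 * G.maxDegree := by
  have hab' : G.Adj a b := hS.1 hab
  have hbc' : G.Adj b c := hS.1 hbc
  have hac' : G.Adj a c := hS.1 hac
  have hT : G.IsNClique 3 {a, b, c} := is3Clique_triple_iff.2 ⟨hab', hac', hbc'⟩
  have hTS : ∀ u ∈ ({a, b, c} : Finset V), ∀ v ∈ ({a, b, c} : Finset V), u ≠ v →
      s(u, v) ∈ S := by
    simp only [mem_insert, mem_singleton]
    rintro u (rfl | rfl | rfl) v (rfl | rfl | rfl) huv <;>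
      first | exact absurd rfl huv | assumption | rwa [Sym2.eq_swap]
  have hmeet : {e ∈ S | ¬∀ v ∈ ({a, b, c} : Finset V), v ∉ e} ⊆
      G.incidenceFinset a ∪ G.incidenceFinset b ∪ G.incidenceFinset c := fun e he => by
    obtain ⟨he, heT⟩ := mem_filter.1 he
    simp only [mem_insert, mem_singleton, forall_eq_or_imp, forall_eq, not_and_or,
      not_not] at heT
    simp only [mem_union, mem_incidenceFinset, incidenceSet, Set.mem_ofPred_eq,
      hS.1 he, true_and]
    tauto
  have := card_le_card hmeet
  have := card_incidenceFinset_union_add_three_le hab' hbc' hac'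
  have := hc5.card_filter_forall_not_mem_le_maxDegree hS hT hTS
  have := card_filter_add_card_filter_not (s := S)
    (fun e => ∀ v ∈ ({a, b, c} : Finset V), v ∉ e)
  have := G.degree_le_maxDegree a
  have := G.degree_le_maxDegree b
  have := G.degree_le_maxDegree c
  omega

end Triangle

theorem stmt11_general {V : Type*} [Fintype V] [DecidableEq V] (G : SimpleGraph V)
    [DecidableRel G.Adj] (hc5 : CycleFree G 5)
    (S : Finset (Sym2 V)) (hSsc : IsStrongClique G ↑S)
    (hmax : ∀ T : Finset (Sym2 V), IsStrongClique G ↑T → T.card ≤ S.card)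
    (htri : ∃ a b c : V, a ≠ b ∧ b ≠ c ∧ a ≠ c ∧
      s(a, b) ∈ S ∧ s(b, c) ∈ S ∧ s(a, c) ∈ S) :
    ∀ T : Finset (Sym2 V), IsStrongClique G ↑T →
      (T.card : ℤ) ≤ 4 * G.maxDegree - 3 := by
  intro T hT
  obtain ⟨a, b, c, -, -, -, hab, hbc, hac⟩ := htri
  have hS := hSsc.card_add_three_le hc5 hab hbc hac
  have hTS := hmax T hT
  omega

/-- Let `G` be a `C₅`-free graph with `Δ(G) ≥ 1` and let `S` be a maximum strong clique
of `G` (so `H = G[S]`). If `H` contains a triangle, then the strong clique number of `G`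
is at most `4Δ(G) - 3`. -/
theorem stmt11 {V : Type*} [Fintype V] [DecidableEq V] (G : SimpleGraph V)
    [DecidableRel G.Adj] (hc5 : CycleFree G 5) (hΔ : 1 ≤ G.maxDegree)
    (S : Finset (Sym2 V)) (hSsc : IsStrongClique G ↑S)
    (hmax : ∀ T : Finset (Sym2 V), IsStrongClique G ↑T → T.card ≤ S.card)
    (htri : ∃ a b c : V, a ≠ b ∧ b ≠ c ∧ a ≠ c ∧
      s(a, b) ∈ S ∧ s(b, c) ∈ S ∧ s(a, c) ∈ S) :
    ∀ T : Finset (Sym2 V), IsStrongClique G ↑T →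
      (T.card : ℤ) ≤ 4 * G.maxDegree - 3 :=
  stmt11_general G hc5 S hSsc hmax htri
end

section
/- For k ∈ {2,3}, if G is a graph with no cycle of length 3, 5, or 2k, and Δ(G) ≥ 1, then the strong clique number of G is at most kΔ(G) − (k−1). -/
/-!
Pairwise intersecting edges of a triangle-free graph form a star, so a strong clique `S` that is
not a star contains disjoint edges `ab`, `cd` joined by an edge `ac`. As `G` has no closed walk of
length 3 or 5, every other edge of `S` can meet the path `b a c d` only in a few rigid ways, each
alternative closing a forbidden cycle. Counting the edges of `S` at `a` and `c` (or `a` and `d`),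
at one further vertex, and in the star formed by the edges avoiding the path then gives the bound.
For `k = 3` one first uses the symmetry `(a, b, c, d) ↦ (c, d, a, b)`: a common neighbour of `b`
and `c` and one of `a` and `d`, both new, would close a hexagon.
-/

open SimpleGraph Finset

section

variable {V : Type*} {G : SimpleGraph V}

section Cycles

variable {a b c d e f : V}

theorem CycleFree.not_adj_of_adj_of_adj (h : CycleFree G 3) (hab : G.Adj a b)
    (hbc : G.Adj b c) : ¬ G.Adj c a := fun hca => by
  refine h a (.cons hab (.cons hbc (.cons hca .nil))) ?_ rfl
  simp [Walk.cons_isCycle_iff, hab.ne, hbc.ne, hca.ne, hab.ne', hca.ne']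

theorem CycleFree.false_of_adj4 (h : CycleFree G 4) (hab : G.Adj a b) (hbc : G.Adj b c)
    (hcd : G.Adj c d) (hda : G.Adj d a) (hac : a ≠ c) (hbd : b ≠ d) : False := by
  refine h a (.cons hab (.cons hbc (.cons hcd (.cons hda .nil)))) ?_ rfl
  simp [Walk.cons_isCycle_iff, hab.ne, hbc.ne, hcd.ne, hda.ne, hab.ne', hda.ne', hac, hbd,
    hac.symm]

/-- A closed walk of length five contains a triangle unless it is a pentagon. -/
theorem CycleFree.false_of_adj5 (h3 : CycleFree G 3) (h5 : CycleFree G 5) (hab : G.Adj a b)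
    (hbc : G.Adj b c) (hcd : G.Adj c d) (hde : G.Adj d e) (hea : G.Adj e a) : False := by
  by_cases hac : a = c; · subst hac; exact h3.not_adj_of_adj_of_adj hcd hde hea
  by_cases had : a = d; · subst had; exact h3.not_adj_of_adj_of_adj hab hbc hcd
  by_cases hbd : b = d; · subst hbd; exact h3.not_adj_of_adj_of_adj hea hab hde
  by_cases hbe : b = e; · subst hbe; exact h3.not_adj_of_adj_of_adj hbc hcd hde
  by_cases hce : c = e; · subst hce; exact h3.not_adj_of_adj_of_adj hab hbc hea
  refine h5 a (.cons hab (.cons hbc (.cons hcd (.cons hde (.cons hea .nil))))) ?_ rfl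
  simp [Walk.cons_isCycle_iff, hab.ne, hbc.ne, hcd.ne, hde.ne, hea.ne, hab.ne', hea.ne', hac,
    hbd, Ne.symm hac, had, Ne.symm had, hbe, hce]

/-- A closed walk of length six whose vertices at distance two are distinct is a hexagon:
vertices at distance three cannot coincide in a triangle-free graph. -/
theorem CycleFree.false_of_adj6 (h3 : CycleFree G 3) (h6 : CycleFree G 6) (hab : G.Adj a b)
    (hbc : G.Adj b c) (hcd : G.Adj c d) (hde : G.Adj d e) (hef : G.Adj e f) (hfa : G.Adj f a)
    (hac : a ≠ c) (hbd : b ≠ d) (hce : c ≠ e) (hdf : d ≠ f) (hea : e ≠ a) (hfb : f ≠ b) :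
    False := by
  by_cases had : a = d; · subst had; exact h3.not_adj_of_adj_of_adj hab hbc hcd
  by_cases hbe : b = e; · subst hbe; exact h3.not_adj_of_adj_of_adj hbc hcd hde
  by_cases hcf : c = f; · subst hcf; exact h3.not_adj_of_adj_of_adj hcd hde hef
  refine h6 a (.cons hab (.cons hbc (.cons hcd (.cons hde (.cons hef (.cons hfa .nil)))))) ?_ rfl
  simp [Walk.cons_isCycle_iff, hab.ne, hbc.ne, hcd.ne, hde.ne, hef.ne, hfa.ne, hab.ne', hfa.ne',
    hac, hbd, hac.symm, had, Ne.symm had, hbe, hce, hea.symm, hea, hfb.symm, hcf, hdf]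

end Cycles

theorem ne_of_notMem_mk {u v w : V} (h : u ∉ s(v, w)) : v ≠ u ∧ w ≠ u :=
  ⟨fun hv => h (hv ▸ Sym2.mem_mk_left v w), fun hw => h (hw ▸ Sym2.mem_mk_right v w)⟩

namespace IsStrongClique

variable {S : Finset (Sym2 V)}

theorem adj (hS : IsStrongClique G S) {p q : V} (h : s(p, q) ∈ S) : G.Adj p q := hS.1 h

theorem eq_or_adj (hS : IsStrongClique G S) {p q r t : V} (h₁ : s(p, q) ∈ S)
    (h₂ : s(r, t) ∈ S) :
    p = r ∨ p = t ∨ q = r ∨ q = t ∨ G.Adj p r ∨ G.Adj p t ∨ G.Adj q r ∨ G.Adj q t := by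
  obtain ⟨u, w, hu, hw, huw⟩ := hS.2 _ (mem_coe.2 h₁) _ (mem_coe.2 h₂)
  rw [Sym2.mem_iff] at hu hw
  rcases hu with rfl | rfl <;> rcases hw with rfl | rfl <;> tauto

end IsStrongClique

theorem exists_forall_mem_of_pairwise_inter (h3 : CycleFree G 3) {E : Set (Sym2 V)}
    (hE : E ⊆ G.edgeSet) (hp : ∀ e ∈ E, ∀ f ∈ E, ∃ v, v ∈ e ∧ v ∈ f) {e₀ : Sym2 V}
    (he₀ : e₀ ∈ E) : ∃ v, ∀ e ∈ E, v ∈ e := by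
  by_cases hall : ∀ e ∈ E, e = e₀
  · obtain ⟨v, hv, -⟩ := hp e₀ he₀ e₀ he₀
    exact ⟨v, fun e he => hall e he ▸ hv⟩
  push Not at hall
  obtain ⟨e₁, he₁, hne⟩ := hall
  obtain ⟨u, hu₀, hu₁⟩ := hp e₀ he₀ e₁ he₁
  obtain ⟨x, rfl⟩ := Sym2.mem_iff_exists.1 hu₀
  obtain ⟨y, rfl⟩ := Sym2.mem_iff_exists.1 hu₁
  refine ⟨u, fun e he => by_contra fun hue => ?_⟩
  -- `e` meets `ux` and `uy` away from `u`, so it is the edge `xy`, closing a triangle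
  obtain ⟨x', hx', hx'e⟩ := hp _ he₀ e he
  obtain ⟨y', hy', hy'e⟩ := hp _ he₁ e he
  obtain rfl : x' = x := (Sym2.mem_iff.1 hx').resolve_left fun h => hue (h ▸ hx'e)
  obtain rfl : y' = y := (Sym2.mem_iff.1 hy').resolve_left fun h => hue (h ▸ hy'e)
  have hxy : x' ≠ y' := fun h => hne (h ▸ rfl)
  have : G.Adj x' y' := hE ((Sym2.mem_and_mem_iff hxy).1 ⟨hx'e, hy'e⟩ ▸ he)
  exact h3.not_adj_of_adj_of_adj (hE he₀) this (hE he₁).symm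

section Degree

variable [Fintype V] [DecidableEq V] [DecidableRel G.Adj]

theorem card_add_card_le_degree {T : Finset (Sym2 V)} {U : Finset V} {v : V}
    (hT : ∀ e ∈ T, e ∈ G.edgeSet ∧ v ∈ e ∧ ∀ u ∈ U, u ∉ e) (hU : ∀ u ∈ U, G.Adj v u) :
    T.card + U.card ≤ G.degree v := by
  have hinj : Function.Injective fun u => s(v, u) := fun _ _ h => Sym2.congr_right.1 h
  rw [← card_image_of_injective U hinj, ← card_union_of_disjoint, ← card_incidenceFinset_eq_degree]
  · refine card_le_card fun e he => (mem_incidenceFinset ..).2 ?_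
    rcases mem_union.1 he with he | he
    · exact ⟨(hT e he).1, (hT e he).2.1⟩
    · obtain ⟨u, hu, rfl⟩ := mem_image.1 he
      exact ⟨hU u hu, Sym2.mem_mk_left v u⟩
  · refine disjoint_left.2 fun e he he' => ?_
    obtain ⟨u, hu, rfl⟩ := mem_image.1 he'
    exact (hT _ he).2.2 u hu (Sym2.mem_mk_right v u)

theorem card_le_degree {T : Finset (Sym2 V)} {v : V} (hT : ∀ e ∈ T, e ∈ G.edgeSet ∧ v ∈ e) :
    T.card ≤ G.degree v := by
  simpa using card_add_card_le_degree (U := ∅) (by simpa using hT) (by simp)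

theorem card_add_card_le_degree_of_adj {T : Finset (Sym2 V)} {U : Finset V} {u v : V}
    (hT : ∀ e ∈ T, ∃ w, e = s(v, w) ∧ G.Adj u w ∧ w ∉ U) (hU : ∀ w ∈ U, G.Adj u w) :
    T.card + U.card ≤ G.degree u := by
  have hsub : T ⊆ (G.neighborFinset u \ U).image fun w => s(v, w) := fun e he => by
    obtain ⟨w, rfl, huw, hwU⟩ := hT e he
    exact mem_image_of_mem _ (mem_sdiff.2 ⟨(mem_neighborFinset ..).2 huw, hwU⟩)
  have hU' : U ⊆ G.neighborFinset u := fun w hw => (mem_neighborFinset ..).2 (hU w hw)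
  rw [← card_neighborFinset_eq_degree, ← card_sdiff_add_card_eq_card hU']
  exact add_le_add_left ((card_le_card hsub).trans card_image_le) _

end Degree

structure BridgedEdges (G : SimpleGraph V) (S : Finset (Sym2 V)) (a b c d : V) : Prop where
  isStrongClique : IsStrongClique G S
  mem_ab : s(a, b) ∈ S
  mem_cd : s(c, d) ∈ S
  adj_ac : G.Adj a c
  ne_ad : a ≠ d
  ne_bc : b ≠ c
  ne_bd : b ≠ d

theorem IsStrongClique.card_le_maxDegree_or_bridgedEdges [Fintype V] [DecidableRel G.Adj]
    {S : Finset (Sym2 V)} (h3 : CycleFree G 3) (hS : IsStrongClique G S) :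
    S.card ≤ G.maxDegree ∨ ∃ a b c d, BridgedEdges G S a b c d := by
  classical
  by_cases hp : ∀ e ∈ S, ∀ f ∈ S, ∃ v, v ∈ e ∧ v ∈ f
  · left
    obtain rfl | ⟨e₀, he₀⟩ := S.eq_empty_or_nonempty
    · simp
    obtain ⟨v, hv⟩ := exists_forall_mem_of_pairwise_inter h3 hS.1 hp (mem_coe.2 he₀)
    exact (card_le_degree fun e he => ⟨hS.1 he, hv e he⟩).trans (G.degree_le_maxDegree v)
  push Not at hp
  obtain ⟨e, he, f, hf, hef⟩ := hp
  obtain ⟨a, c, ha, hc, rfl | hac⟩ := hS.2 e (mem_coe.2 he) f (mem_coe.2 hf)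
  · exact absurd hc (hef a ha)
  obtain ⟨b, rfl⟩ := Sym2.mem_iff_exists.1 ha
  obtain ⟨d, rfl⟩ := Sym2.mem_iff_exists.1 hc
  refine Or.inr ⟨a, b, c, d, hS, he, hf, hac, ?_, ?_, ?_⟩ <;> rintro rfl <;> simp at hef

/-- The edges of `S` avoiding the path `b a c d`. -/
def outerEdges [DecidableEq V] (S : Finset (Sym2 V)) (a b c d : V) : Finset (Sym2 V) :=
  S.filter fun e => a ∉ e ∧ b ∉ e ∧ c ∉ e ∧ d ∉ e

theorem mem_outerEdges [DecidableEq V] {S : Finset (Sym2 V)} {a b c d x y : V} :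
    s(x, y) ∈ outerEdges S a b c d ↔ s(x, y) ∈ S ∧ x ≠ a ∧ y ≠ a ∧ x ≠ b ∧ y ≠ b ∧
      x ≠ c ∧ y ≠ c ∧ x ≠ d ∧ y ≠ d := by
  simp only [outerEdges, mem_filter, Sym2.mem_iff, not_or, ne_comm (a := x), ne_comm (a := y)]
  tauto

namespace BridgedEdges

variable {S : Finset (Sym2 V)} {a b c d w x y z : V}

theorem symm (h : BridgedEdges G S a b c d) : BridgedEdges G S c d a b :=
  ⟨h.isStrongClique, h.mem_cd, h.mem_ab, h.adj_ac.symm, h.ne_bc.symm, h.ne_ad.symm,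
    h.ne_bd.symm⟩

theorem adj_ab (h : BridgedEdges G S a b c d) : G.Adj a b := h.isStrongClique.adj h.mem_ab

theorem adj_cd (h : BridgedEdges G S a b c d) : G.Adj c d := h.isStrongClique.adj h.mem_cd

theorem not_adj_bc (h : BridgedEdges G S a b c d) (h3 : CycleFree G 3) : ¬ G.Adj b c :=
  fun hbc => h3.not_adj_of_adj_of_adj h.adj_ab hbc h.adj_ac.symm

theorem not_adj_ad (h : BridgedEdges G S a b c d) (h3 : CycleFree G 3) : ¬ G.Adj a d :=
  fun had => h3.not_adj_of_adj_of_adj h.adj_ac h.adj_cd had.symm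

theorem two_le_degree [Fintype V] [DecidableRel G.Adj] (h : BridgedEdges G S a b c d) :
    2 ≤ G.degree a := by
  classical
  have := card_add_card_le_degree (T := ∅) (U := {b, c}) (by simp)
    (by simpa using ⟨h.adj_ab, h.adj_ac⟩)
  rwa [card_pair h.ne_bc] at this

section Girth6

theorem not_adj_bd (h : BridgedEdges G S a b c d) (h4 : CycleFree G 4) : ¬ G.Adj b d :=
  fun hbd => h4.false_of_adj4 h.adj_ab hbd h.adj_cd.symm h.adj_ac.symm h.ne_ad h.ne_bc

theorem eq_of_mem_b (h : BridgedEdges G S a b c d) (h3 : CycleFree G 3) (h4 : CycleFree G 4)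
    (h5 : CycleFree G 5) (hz : s(b, z) ∈ S) : z = a := by
  by_contra hza
  have hbz := h.isStrongClique.adj hz
  rcases h.isStrongClique.eq_or_adj hz h.mem_cd with h' | h' | rfl | rfl | h' | h' | h' | h'
  · exact h.ne_bc h'
  · exact h.ne_bd h'
  · exact h.not_adj_bc h3 hbz
  · exact h.not_adj_bd h4 hbz
  · exact h.not_adj_bc h3 h'
  · exact h.not_adj_bd h4 h'
  · exact h4.false_of_adj4 h.adj_ab hbz h' h.adj_ac.symm (Ne.symm hza) h.ne_bc
  · exact h3.false_of_adj5 h5 h.adj_ab hbz h' h.adj_cd.symm h.adj_ac.symm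

theorem not_adj_a_of_mem (h : BridgedEdges G S a b c d) (h3 : CycleFree G 3) (h4 : CycleFree G 4)
    (h5 : CycleFree G 5) (hxy : s(x, y) ∈ S) (hxc : x ≠ c) (hya : y ≠ a) : ¬ G.Adj a x := by
  intro hax
  have hxy' := h.isStrongClique.adj hxy
  rcases h.isStrongClique.eq_or_adj hxy h.mem_cd with rfl | rfl | rfl | rfl | h' | h' | h' | h'
  · exact hxc rfl
  · exact h.not_adj_ad h3 hax
  · exact h3.not_adj_of_adj_of_adj hax hxy' h.adj_ac.symm
  · exact h4.false_of_adj4 hax hxy' h.adj_cd.symm h.adj_ac.symm h.ne_ad hxc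
  · exact h3.not_adj_of_adj_of_adj hax h' h.adj_ac.symm
  · exact h4.false_of_adj4 hax h' h.adj_cd.symm h.adj_ac.symm h.ne_ad hxc
  · exact h4.false_of_adj4 hax hxy' h' h.adj_ac.symm (Ne.symm hya) hxc
  · exact h3.false_of_adj5 h5 hax hxy' h' h.adj_cd.symm h.adj_ac.symm

theorem not_adj_of_adj_b_of_adj_d (h : BridgedEdges G S a b c d) (h3 : CycleFree G 3)
    (h5 : CycleFree G 5) (hbx : G.Adj b x) : ¬ G.Adj d x := fun hdx =>
  h3.false_of_adj5 h5 h.adj_ab hbx hdx.symm h.adj_cd.symm h.adj_ac.symm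

theorem eq_b_of_mem_a (h : BridgedEdges G S a b c d) (h3 : CycleFree G 3) (h4 : CycleFree G 4)
    (h5 : CycleFree G 5) (hxy : s(x, y) ∈ S) (hxa : x ≠ a) (hyc : y ≠ c) (hbx : G.Adj b x)
    (hdy : G.Adj d y) (hz : s(a, z) ∈ S) : z = b := by
  by_contra hzb
  have haz := h.isStrongClique.adj hz
  rcases h.isStrongClique.eq_or_adj hz hxy with rfl | rfl | rfl | rfl | h' | h' | h' | h'
  · exact hxa rfl
  · exact h.not_adj_ad h3 hdy.symm
  · exact h3.not_adj_of_adj_of_adj haz hbx.symm h.adj_ab.symm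
  · exact h4.false_of_adj4 haz hdy.symm h.adj_cd.symm h.adj_ac.symm h.ne_ad hyc
  · exact h3.not_adj_of_adj_of_adj h' hbx.symm h.adj_ab.symm
  · exact h4.false_of_adj4 h' hdy.symm h.adj_cd.symm h.adj_ac.symm h.ne_ad hyc
  · exact h4.false_of_adj4 haz h' hbx.symm h.adj_ab.symm (Ne.symm hxa) hzb
  · exact h3.false_of_adj5 h5 haz h' hdy.symm h.adj_cd.symm h.adj_ac.symm

theorem eq_of_adj_b_of_adj_d (h : BridgedEdges G S a b c d) (h3 : CycleFree G 3)
    (h4 : CycleFree G 4) (h5 : CycleFree G 5) {x' y' : V} (hxy : s(x, y) ∈ S) (hbx : G.Adj b x)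
    (hdy : G.Adj d y) (hxy' : s(x', y') ∈ S) (hbx' : G.Adj b x') (hdy' : G.Adj d y') :
    s(x', y') = s(x, y) := by
  have hx := h.isStrongClique.adj hxy
  have hx' := h.isStrongClique.adj hxy'
  have hbd : ∀ {w}, G.Adj b w → ¬ G.Adj d w := h.not_adj_of_adj_b_of_adj_d h3 h5
  have hby : ∀ {w}, G.Adj d w → b ≠ w := by rintro w hdw rfl; exact h.not_adj_bd h4 hdw.symm
  by_cases hxx : x = x'
  · subst hxx
    by_contra hyy
    exact h4.false_of_adj4 hx hdy.symm hdy' hx'.symm (by rintro rfl; exact h.not_adj_bd h4 hbx)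
      (by rintro rfl; exact hyy rfl)
  have hyy : y ≠ y' := by
    rintro rfl
    exact h4.false_of_adj4 hbx hx hx'.symm hbx'.symm (hby hdy) hxx
  exfalso
  rcases h.isStrongClique.eq_or_adj hxy hxy' with h' | rfl | rfl | h' | h' | h' | h' | h'
  · exact hxx h'
  · exact hbd hbx hdy'
  · exact hbd hbx' hdy
  · exact hyy h'
  · exact h3.not_adj_of_adj_of_adj hbx h' hbx'.symm
  · exact h4.false_of_adj4 hbx h' hx'.symm hbx'.symm (hby hdy') hxx
  · exact h4.false_of_adj4 hbx' h'.symm hx.symm hbx.symm (hby hdy) (Ne.symm hxx)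
  · exact h3.not_adj_of_adj_of_adj hdy h' hdy'.symm

variable [DecidableEq V]

theorem adj_d_of_adj_b (h : BridgedEdges G S a b c d) (h3 : CycleFree G 3)
    (h4 : CycleFree G 4) (h5 : CycleFree G 5) (he : s(x, y) ∈ outerEdges S a b c d)
    (hbx : G.Adj b x) : G.Adj d y := by
  obtain ⟨hxy, hxa, hya, -, -, hxc, hyc, hxd, hyd⟩ := mem_outerEdges.1 he
  rcases h.isStrongClique.eq_or_adj h.mem_cd hxy with h' | h' | h' | h' | h' | h' | h' | h'
  · exact absurd h'.symm hxc
  · exact absurd h'.symm hyc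
  · exact absurd h'.symm hxd
  · exact absurd h'.symm hyd
  · exact absurd h' (h.symm.not_adj_a_of_mem h3 h4 h5 hxy hxa hyc)
  · exact absurd h' (h.symm.not_adj_a_of_mem h3 h4 h5 (Sym2.eq_swap ▸ hxy) hya hxc)
  · exact (h3.false_of_adj5 h5 h.adj_ab hbx h'.symm h.adj_cd.symm h.adj_ac.symm).elim
  · exact h'

theorem exists_adj_b_adj_d_of_mem_outerEdges (h : BridgedEdges G S a b c d)
    (h3 : CycleFree G 3) (h4 : CycleFree G 4) (h5 : CycleFree G 5) {e : Sym2 V}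
    (he : e ∈ outerEdges S a b c d) : ∃ x y, e = s(x, y) ∧ G.Adj b x ∧ G.Adj d y := by
  induction e using Sym2.ind with | _ x y => ?_
  obtain ⟨hxy, hxa, hya, hxb, hyb, hxc, hyc, -, -⟩ := mem_outerEdges.1 he
  rcases h.isStrongClique.eq_or_adj h.mem_ab hxy with h' | h' | h' | h' | h' | h' | h' | h'
  · exact absurd h'.symm hxa
  · exact absurd h'.symm hya
  · exact absurd h'.symm hxb
  · exact absurd h'.symm hyb
  · exact absurd h' (h.not_adj_a_of_mem h3 h4 h5 hxy hxc hya)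
  · exact absurd h' (h.not_adj_a_of_mem h3 h4 h5 (Sym2.eq_swap ▸ hxy) hyc hxa)
  · exact ⟨x, y, rfl, h', h.adj_d_of_adj_b h3 h4 h5 he h'⟩
  · exact ⟨y, x, Sym2.eq_swap, h', h.adj_d_of_adj_b h3 h4 h5 (Sym2.eq_swap ▸ he) h'⟩

theorem mem_outerEdges_of_notMem (h : BridgedEdges G S a b c d) (h3 : CycleFree G 3)
    (h4 : CycleFree G 4) (h5 : CycleFree G 5) {e : Sym2 V} (he : e ∈ S) (ha : a ∉ e)
    (hc : c ∉ e) : e ∈ outerEdges S a b c d := by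
  refine mem_filter.2 ⟨he, ha, fun hb => ha ?_, hc, fun hd => hc ?_⟩
  · obtain ⟨z, rfl⟩ := Sym2.mem_iff_exists.1 hb
    exact h.eq_of_mem_b h3 h4 h5 he ▸ Sym2.mem_mk_right b z
  · obtain ⟨z, rfl⟩ := Sym2.mem_iff_exists.1 hd
    exact h.symm.eq_of_mem_b h3 h4 h5 he ▸ Sym2.mem_mk_right d z

theorem subset_of_mem_outerEdges (h : BridgedEdges G S a b c d) (h3 : CycleFree G 3)
    (h4 : CycleFree G 4) (h5 : CycleFree G 5) (he : s(x, y) ∈ outerEdges S a b c d)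
    (hbx : G.Adj b x) (hdy : G.Adj d y) : S ⊆ {s(a, b), s(c, d), s(x, y)} := fun f hf => by
  obtain ⟨hxy, hxa, -, -, -, -, hyc, -, -⟩ := mem_outerEdges.1 he
  simp only [mem_insert, mem_singleton]
  by_cases haf : a ∈ f
  · obtain ⟨z, rfl⟩ := Sym2.mem_iff_exists.1 haf
    exact .inl (by rw [h.eq_b_of_mem_a h3 h4 h5 hxy hxa hyc hbx hdy hf])
  by_cases hcf : c ∈ f
  · obtain ⟨z, rfl⟩ := Sym2.mem_iff_exists.1 hcf
    exact .inr (.inl (by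
      rw [h.symm.eq_b_of_mem_a h3 h4 h5 (Sym2.eq_swap ▸ hxy) hyc hxa hdy hbx hf]))
  obtain ⟨x', y', rfl, hbx', hdy'⟩ := h.exists_adj_b_adj_d_of_mem_outerEdges h3 h4 h5
    (h.mem_outerEdges_of_notMem h3 h4 h5 hf haf hcf)
  exact .inr (.inr (h.eq_of_adj_b_of_adj_d h3 h4 h5 hxy hbx hdy hf hbx' hdy'))

theorem card_add_one_le_two_mul_maxDegree [Fintype V] [DecidableRel G.Adj]
    (h : BridgedEdges G S a b c d) (h3 : CycleFree G 3) (h4 : CycleFree G 4)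
    (h5 : CycleFree G 5) : S.card + 1 ≤ 2 * G.maxDegree := by
  have hΔa := G.degree_le_maxDegree a
  have hΔc := G.degree_le_maxDegree c
  by_cases hout : (outerEdges S a b c d).Nonempty
  · obtain ⟨e, he⟩ := hout
    obtain ⟨x, y, rfl, hbx, hdy⟩ := h.exists_adj_b_adj_d_of_mem_outerEdges h3 h4 h5 he
    have := (card_le_card (h.subset_of_mem_outerEdges h3 h4 h5 he hbx hdy)).trans card_le_three
    have := h.two_le_degree
    omega
  have hsub : S ⊆ S.filter (a ∈ ·) ∪ S.filter fun e => a ∉ e ∧ c ∈ e := fun e he => by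
    by_cases hae : a ∈ e
    · exact mem_union_left _ (mem_filter.2 ⟨he, hae⟩)
    refine mem_union_right _ (mem_filter.2 ⟨he, hae, by_contra fun hce => hout ?_⟩)
    exact ⟨e, h.mem_outerEdges_of_notMem h3 h4 h5 he hae hce⟩
  have hA : (S.filter (a ∈ ·)).card ≤ G.degree a :=
    card_le_degree fun e he => ⟨h.isStrongClique.1 (mem_filter.1 he).1, (mem_filter.1 he).2⟩
  have hC : (S.filter fun e => a ∉ e ∧ c ∈ e).card + ({a} : Finset V).card ≤ G.degree c :=
    card_add_card_le_degree (fun e he => ⟨h.isStrongClique.1 (mem_filter.1 he).1,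
      (mem_filter.1 he).2.2, by simpa using (mem_filter.1 he).2.1⟩) (by simpa using h.adj_ac.symm)
  rw [card_singleton] at hC
  have := (card_le_card hsub).trans (card_union_le _ _)
  omega

end Girth6

section NoHexagon

theorem commonNeighbors_subset_or (h : BridgedEdges G S a b c d) (h3 : CycleFree G 3)
    (h6 : CycleFree G 6) :
    G.commonNeighbors b c ⊆ {a, d} ∨ G.commonNeighbors d a ⊆ {c, b} := by
  by_contra! ⟨hbc, hda⟩
  obtain ⟨q, ⟨hbq, hcq⟩, hq⟩ := Set.not_subset.1 hbc
  obtain ⟨p, ⟨hdp, hap⟩, hp⟩ := Set.not_subset.1 hda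
  simp only [Set.mem_insert_iff, Set.mem_singleton_iff, not_or] at hq hp
  obtain ⟨hqa, hqd⟩ := hq
  obtain ⟨hpc, hpb⟩ := hp
  exact h3.false_of_adj6 h6 h.adj_ab hbq hcq.symm h.adj_cd hdp hap.symm (Ne.symm hqa) h.ne_bc
    hqd (Ne.symm hpc) h.ne_ad.symm hpb

theorem eq_or_adj_bd_of_mem_b (h : BridgedEdges G S a b c d) (h3 : CycleFree G 3)
    (h5 : CycleFree G 5) (hQ : G.commonNeighbors b c ⊆ {a, d})
    (hz : s(b, z) ∈ S) : z = a ∨ G.Adj b d := by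
  by_contra! ⟨hza, hbd⟩
  have hbz := h.isStrongClique.adj hz
  rcases h.isStrongClique.eq_or_adj hz h.mem_cd with h' | h' | rfl | rfl | h' | h' | h' | h'
  · exact h.ne_bc h'
  · exact h.ne_bd h'
  · exact h.not_adj_bc h3 hbz
  · exact hbd hbz
  · exact h.not_adj_bc h3 h'
  · exact hbd h'
  · exact (hQ ⟨hbz, h'.symm⟩).elim hza fun hzd => hbd (hzd ▸ hbz)
  · exact h3.false_of_adj5 h5 h.adj_ab hbz h' h.adj_cd.symm h.adj_ac.symm

theorem eq_or_adj_of_mem_d (h : BridgedEdges G S a b c d) (h3 : CycleFree G 3)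
    (h5 : CycleFree G 5) (hw : s(d, w) ∈ S) : w = b ∨ G.Adj b d ∨ G.Adj a w := by
  have hdw := h.isStrongClique.adj hw
  rcases h.isStrongClique.eq_or_adj hw h.mem_ab with h' | h' | rfl | h' | h' | h' | h' | h'
  · exact absurd h'.symm h.ne_ad
  · exact absurd h'.symm h.ne_bd
  · exact absurd hdw.symm (h.not_adj_ad h3)
  · exact .inl h'
  · exact absurd h'.symm (h.not_adj_ad h3)
  · exact .inr (.inl h'.symm)
  · exact .inr (.inr h'.symm)
  · exact (h3.false_of_adj5 h5 h.adj_ab h'.symm hdw.symm h.adj_cd.symm h.adj_ac.symm).elim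

theorem adj_d_or_adj_c (h : BridgedEdges G S a b c d) (h3 : CycleFree G 3) (h5 : CycleFree G 5)
    (hxy : s(x, y) ∈ S) (hxc : x ≠ c) (hax : G.Adj a x) : G.Adj d x ∨ G.Adj c y := by
  have hxy' := h.isStrongClique.adj hxy
  rcases h.isStrongClique.eq_or_adj hxy h.mem_cd with h' | rfl | rfl | rfl | h' | h' | h' | h'
  · exact absurd h' hxc
  · exact absurd hax (h.not_adj_ad h3)
  · exact absurd h.adj_ac.symm (h3.not_adj_of_adj_of_adj hax hxy')
  · exact .inl hxy'.symm
  · exact absurd h.adj_ac.symm (h3.not_adj_of_adj_of_adj hax h')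
  · exact .inl h'.symm
  · exact .inr h'.symm
  · exact (h3.false_of_adj5 h5 hax hxy' h' h.adj_cd.symm h.adj_ac.symm).elim

theorem not_adj_b_of_mem (h : BridgedEdges G S a b c d) (h3 : CycleFree G 3)
    (h5 : CycleFree G 5) (h6 : CycleFree G 6) (hQ : G.commonNeighbors b c ⊆ {a, d})
    (hxy : s(x, y) ∈ S) (hxa : x ≠ a) (hxd : x ≠ d) (hyb : y ≠ b) : ¬ G.Adj b x := by
  intro hbx
  have hxy' := h.isStrongClique.adj hxy
  have hQx : ¬ G.Adj c x := fun hcx => (hQ ⟨hbx, hcx⟩).elim hxa hxd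
  rcases h.isStrongClique.eq_or_adj hxy h.mem_cd with rfl | rfl | rfl | rfl | h' | h' | h' | h'
  · exact h.not_adj_bc h3 hbx
  · exact hxd rfl
  · exact hQx hxy'.symm
  · exact h3.false_of_adj5 h5 h.adj_ab hbx hxy' h.adj_cd.symm h.adj_ac.symm
  · exact hQx h'.symm
  · exact h3.false_of_adj5 h5 h.adj_ab hbx h' h.adj_cd.symm h.adj_ac.symm
  · exact h3.false_of_adj5 h5 hbx hxy' h' h.adj_ac.symm h.adj_ab
  · have hyc : y ≠ c := fun hyc => hQx (hyc ▸ hxy'.symm)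
    exact h3.false_of_adj6 h6 h.adj_ab hbx hxy' h' h.adj_cd.symm h.adj_ac.symm (Ne.symm hxa)
      (Ne.symm hyb) hxd hyc h.ne_ad.symm h.ne_bc.symm

theorem false_of_mem_b_of_mem_c (h : BridgedEdges G S a b c d) (h3 : CycleFree G 3)
    (h5 : CycleFree G 5) (hQ : G.commonNeighbors b c ⊆ {a, d})
    (hz : s(b, z) ∈ S) (hza : z ≠ a) (hzd : z ≠ d) (hw : s(c, w) ∈ S) (hwa : w ≠ a)
    (hwd : w ≠ d) : False := by
  have hbz := h.isStrongClique.adj hz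
  have hcw := h.isStrongClique.adj hw
  have hQz : ∀ {u}, u ≠ a → u ≠ d → G.Adj b u → ¬ G.Adj c u := fun hua hud hbu hcu =>
    (hQ ⟨hbu, hcu⟩).elim hua hud
  rcases h.isStrongClique.eq_or_adj hz hw with h' | rfl | rfl | rfl | h' | h' | h' | h'
  · exact h.ne_bc h'
  · exact h.not_adj_bc h3 hcw.symm
  · exact h.not_adj_bc h3 hbz
  · exact hQz hza hzd hbz hcw
  · exact h.not_adj_bc h3 h'
  · exact hQz hwa hwd h' hcw
  · exact hQz hza hzd hbz h'.symm
  · exact h3.false_of_adj5 h5 hbz h' hcw.symm h.adj_ac.symm h.adj_ab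

theorem mem_a_of_mem_b_of_not_adj_bd (h : BridgedEdges G S a b c d) (h3 : CycleFree G 3)
    (h5 : CycleFree G 5) (hQ : G.commonNeighbors b c ⊆ {a, d}) (hbd : ¬ G.Adj b d)
    {e : Sym2 V} (he : e ∈ S) (hb : b ∈ e) : a ∈ e := by
  obtain ⟨z, rfl⟩ := Sym2.mem_iff_exists.1 hb
  obtain rfl := (h.eq_or_adj_bd_of_mem_b h3 h5 hQ he).resolve_right hbd
  exact Sym2.mem_mk_right b _

variable [DecidableEq V]

theorem exists_adj_a_of_mem_outerEdges (h : BridgedEdges G S a b c d) (h3 : CycleFree G 3)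
    (h5 : CycleFree G 5) (h6 : CycleFree G 6) (hQ : G.commonNeighbors b c ⊆ {a, d})
    {e : Sym2 V} (he : e ∈ outerEdges S a b c d) :
    ∃ x y, e = s(x, y) ∧ G.Adj a x ∧ (G.Adj d x ∨ G.Adj c y) := by
  induction e using Sym2.ind with | _ x y => ?_
  obtain ⟨hxy, hxa, hya, hxb, hyb, hxc, hyc, hxd, hyd⟩ := mem_outerEdges.1 he
  have hyx : s(y, x) ∈ S := Sym2.eq_swap ▸ hxy
  rcases h.isStrongClique.eq_or_adj h.mem_ab hxy with h' | h' | h' | h' | h' | h' | h' | h'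
  · exact absurd h'.symm hxa
  · exact absurd h'.symm hya
  · exact absurd h'.symm hxb
  · exact absurd h'.symm hyb
  · exact ⟨x, y, rfl, h', h.adj_d_or_adj_c h3 h5 hxy hxc h'⟩
  · exact ⟨y, x, Sym2.eq_swap, h', h.adj_d_or_adj_c h3 h5 hyx hyc h'⟩
  · exact absurd h' (h.not_adj_b_of_mem h3 h5 h6 hQ hxy hxa hxd hyb)
  · exact absurd h' (h.not_adj_b_of_mem h3 h5 h6 hQ hyx hya hyd hxb)

/-- Two disjoint outer edges `x₁y₁`, `x₂y₂` joined by `x₁y₂` always close a hexagon. -/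
theorem false_of_adj_of_mem_outerEdges (h : BridgedEdges G S a b c d) (h3 : CycleFree G 3)
    (h6 : CycleFree G 6) {x₁ y₁ x₂ y₂ : V} (he₁ : s(x₁, y₁) ∈ outerEdges S a b c d)
    (he₂ : s(x₂, y₂) ∈ outerEdges S a b c d) (hax₁ : G.Adj a x₁) (hax₂ : G.Adj a x₂)
    (ht₁ : G.Adj d x₁ ∨ G.Adj c y₁) (ht₂ : G.Adj d x₂ ∨ G.Adj c y₂) (hx : x₁ ≠ x₂)
    (hy : y₁ ≠ y₂) (hx₁y₂ : G.Adj x₁ y₂) : False := by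
  obtain ⟨hS₁, -, hy₁a, -, -, hx₁c, -, -, hy₁d⟩ := mem_outerEdges.1 he₁
  obtain ⟨hS₂, -, hy₂a, -, -, hx₂c, -, -, hy₂d⟩ := mem_outerEdges.1 he₂
  have hxy₁ := h.isStrongClique.adj hS₁
  have hxy₂ := h.isStrongClique.adj hS₂
  rcases ht₁ with hdx₁ | hcy₁
  · exact h3.false_of_adj6 h6 hdx₁ hx₁y₂ hxy₂.symm hax₂.symm h.adj_ac h.adj_cd (Ne.symm hy₂d)
      hx hy₂a hx₂c h.ne_ad (Ne.symm hx₁c)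
  rcases ht₂ with hdx₂ | hcy₂
  · exact h3.false_of_adj6 h6 hcy₁ hxy₁.symm hx₁y₂ hxy₂.symm hdx₂.symm h.adj_cd.symm
      (Ne.symm hx₁c) hy hx hy₂d hx₂c (Ne.symm hy₁d)
  · exact h3.false_of_adj6 h6 hax₁ hxy₁ hcy₁.symm hcy₂ hxy₂.symm hax₂.symm (Ne.symm hy₁a) hx₁c
      hy (Ne.symm hx₂c) hy₂a (Ne.symm hx)

theorem exists_mem_inter_of_mem_outerEdges (h : BridgedEdges G S a b c d) (h3 : CycleFree G 3)
    (h5 : CycleFree G 5) (h6 : CycleFree G 6) (hQ : G.commonNeighbors b c ⊆ {a, d})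
    {e f : Sym2 V} (he : e ∈ outerEdges S a b c d) (hf : f ∈ outerEdges S a b c d) :
    ∃ v, v ∈ e ∧ v ∈ f := by
  obtain ⟨x₁, y₁, rfl, hax₁, ht₁⟩ := h.exists_adj_a_of_mem_outerEdges h3 h5 h6 hQ he
  obtain ⟨x₂, y₂, rfl, hax₂, ht₂⟩ := h.exists_adj_a_of_mem_outerEdges h3 h5 h6 hQ hf
  by_contra! hno
  simp only [Sym2.mem_iff, forall_eq_or_imp, forall_eq, not_or] at hno
  obtain ⟨⟨hx, hxy⟩, ⟨hyx, hy⟩⟩ := hno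
  have hxy₁ := h.isStrongClique.adj (mem_filter.1 he).1
  have hxy₂ := h.isStrongClique.adj (mem_filter.1 hf).1
  rcases h.isStrongClique.eq_or_adj (mem_filter.1 he).1 (mem_filter.1 hf).1 with
    h' | h' | h' | h' | h' | h' | h' | h'
  · exact hx h'
  · exact hxy h'
  · exact hyx h'
  · exact hy h'
  · exact h3.not_adj_of_adj_of_adj hax₁ h' hax₂.symm
  · exact h.false_of_adj_of_mem_outerEdges h3 h6 he hf hax₁ hax₂ ht₁ ht₂ hx hy h'
  · exact h.false_of_adj_of_mem_outerEdges h3 h6 hf he hax₂ hax₁ ht₂ ht₁ (Ne.symm hx)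
      (Ne.symm hy) h'.symm
  · exact h3.false_of_adj5 h5 hax₁ hxy₁ h' hxy₂.symm hax₂.symm

theorem adj_d_of_mem_outerEdges_of_mem_d (h : BridgedEdges G S a b c d) (h3 : CycleFree G 3)
    (h6 : CycleFree G 6) (hw : s(d, w) ∈ S) (haw : G.Adj a w) (hwc : w ≠ c)
    (he : s(x, y) ∈ outerEdges S a b c d) (hax : G.Adj a x) (hcy : G.Adj c y) : G.Adj d x := by
  obtain ⟨hxy, -, hya, -, -, hxc, -, hxd, hyd⟩ := mem_outerEdges.1 he
  have hdw := h.isStrongClique.adj hw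
  have hxy' := h.isStrongClique.adj hxy
  by_contra hdx
  rcases h.isStrongClique.eq_or_adj hw hxy with h' | h' | rfl | rfl | h' | h' | h' | h'
  · exact hxd h'.symm
  · exact hyd h'.symm
  · exact hdx hdw
  · exact h3.not_adj_of_adj_of_adj h.adj_cd hdw hcy.symm
  · exact hdx h'
  · exact h3.not_adj_of_adj_of_adj h.adj_cd h' hcy.symm
  · exact h3.not_adj_of_adj_of_adj haw h' hax.symm
  · exact h3.false_of_adj6 h6 hxy' h'.symm hdw.symm h.adj_cd.symm h.adj_ac.symm hax
      (by rintro rfl; exact hdx hdw) hyd hwc h.ne_ad.symm (Ne.symm hxc) (Ne.symm hya)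

theorem eq_of_mem_c_of_mem_outerEdges (h : BridgedEdges G S a b c d) (h3 : CycleFree G 3)
    (h5 : CycleFree G 5) (h6 : CycleFree G 6) (hz : s(c, z) ∈ S) (hza : z ≠ a) (hzd : z ≠ d)
    (he : s(x, y) ∈ outerEdges S a b c d) (hax : G.Adj a x) (hdx : G.Adj d x)
    (haw : G.Adj a w) (hdw : G.Adj d w) (hwc : w ≠ c) (hwx : w ≠ x) : z = y := by
  obtain ⟨hxy, -, hya, -, -, hxc, hyc, -, hyd⟩ := mem_outerEdges.1 he
  have hcz := h.isStrongClique.adj hz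
  have hxy' := h.isStrongClique.adj hxy
  by_contra hzy
  rcases h.isStrongClique.eq_or_adj hz hxy with h' | h' | rfl | h' | h' | h' | h' | h'
  · exact hxc h'.symm
  · exact hyc h'.symm
  · exact h3.not_adj_of_adj_of_adj hcz hdx.symm h.adj_cd.symm
  · exact hzy h'
  · exact h3.not_adj_of_adj_of_adj h' hdx.symm h.adj_cd.symm
  · exact h3.false_of_adj6 h6 h' hxy'.symm hdx.symm hdw haw.symm h.adj_ac (Ne.symm hxc) hyd
      (Ne.symm hwx) h.ne_ad.symm hwc (Ne.symm hya)
  · exact h3.false_of_adj6 h6 hcz h' hdx.symm hdw haw.symm h.adj_ac (Ne.symm hxc) hzd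
      (Ne.symm hwx) h.ne_ad.symm hwc (Ne.symm hza)
  · exact h3.false_of_adj5 h5 hcz h' hxy'.symm hdx.symm h.adj_cd.symm

theorem not_adj_c_of_mem_outerEdges_of_adj_bd (h : BridgedEdges G S a b c d)
    (h3 : CycleFree G 3) (h6 : CycleFree G 6) (hbd : G.Adj b d)
    (he : s(x, y) ∈ outerEdges S a b c d) (hax : G.Adj a x) : ¬ G.Adj c y := fun hcy => by
  obtain ⟨hxy, -, hya, hxb, -, hxc, -, -, hyd⟩ := mem_outerEdges.1 he
  exact h3.false_of_adj6 h6 (h.isStrongClique.adj hxy) hcy.symm h.adj_cd hbd.symm h.adj_ab.symm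
    hax hxc hyd h.ne_bc.symm h.ne_ad.symm (Ne.symm hxb) (Ne.symm hya)

theorem exists_adj_a_adj_d_of_mem_outerEdges_of_adj_bd (h : BridgedEdges G S a b c d)
    (h3 : CycleFree G 3) (h5 : CycleFree G 5) (h6 : CycleFree G 6)
    (hQ : G.commonNeighbors b c ⊆ {a, d}) (hbd : G.Adj b d) {e : Sym2 V}
    (he : e ∈ outerEdges S a b c d) : ∃ x y, e = s(x, y) ∧ G.Adj a x ∧ G.Adj d x := by
  obtain ⟨x, y, rfl, hax, ht⟩ := h.exists_adj_a_of_mem_outerEdges h3 h5 h6 hQ he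
  exact ⟨x, y, rfl, hax,
    ht.resolve_right (h.not_adj_c_of_mem_outerEdges_of_adj_bd h3 h6 hbd he hax)⟩

theorem false_of_mem_b_of_mem_outerEdges (h : BridgedEdges G S a b c d) (h3 : CycleFree G 3)
    (h5 : CycleFree G 5) (h6 : CycleFree G 6) (hbd : G.Adj b d) (hz : s(b, z) ∈ S)
    (hza : z ≠ a) (hzd : z ≠ d) (he : s(x, y) ∈ outerEdges S a b c d) (hax : G.Adj a x)
    (hdx : G.Adj d x) : False := by
  obtain ⟨hxy, -, hya, hxb, hyb, hxc, -, -, hyd⟩ := mem_outerEdges.1 he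
  have hbz := h.isStrongClique.adj hz
  have hxy' := h.isStrongClique.adj hxy
  have hex : ∀ {u}, u = y → G.Adj b u → False := by
    rintro _ rfl hby
    exact h3.false_of_adj6 h6 h.adj_ac.symm hax hxy' hby.symm hbd h.adj_cd.symm (Ne.symm hxc)
      (Ne.symm hya) hxb hyd h.ne_bc h.ne_ad.symm
  rcases h.isStrongClique.eq_or_adj hz hxy with h' | h' | rfl | h' | h' | h' | h' | h'
  · exact hxb h'.symm
  · exact hyb h'.symm
  · exact h3.not_adj_of_adj_of_adj h.adj_ab hbz hax.symm
  · exact hex h' hbz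
  · exact h3.not_adj_of_adj_of_adj h.adj_ab h' hax.symm
  · exact hex rfl h'
  · exact h3.false_of_adj6 h6 h.adj_cd hdx h'.symm hbz.symm h.adj_ab.symm h.adj_ac
      (Ne.symm hxc) (Ne.symm hzd) hxb hza h.ne_bc h.ne_ad
  · exact h3.false_of_adj5 h5 hbz h' hxy'.symm hax.symm h.adj_ab

theorem false_of_mem_c_of_mem_outerEdges (h : BridgedEdges G S a b c d) (h3 : CycleFree G 3)
    (h5 : CycleFree G 5) (h6 : CycleFree G 6) (hbd : G.Adj b d) (hw : s(c, w) ∈ S)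
    (hwa : w ≠ a) (hwd : w ≠ d) (he : s(x, y) ∈ outerEdges S a b c d) (hax : G.Adj a x)
    (hdx : G.Adj d x) : False := by
  obtain ⟨hxy, -, hya, hxb, -, hxc, hyc, -, hyd⟩ := mem_outerEdges.1 he
  have hcw := h.isStrongClique.adj hw
  have hxy' := h.isStrongClique.adj hxy
  have hey : ∀ {u}, u = y → G.Adj c u → False := by
    rintro _ rfl hcy
    exact h3.false_of_adj6 h6 hcy hxy'.symm hax.symm h.adj_ab hbd h.adj_cd.symm (Ne.symm hxc)
      hya hxb h.ne_ad h.ne_bc (Ne.symm hyd)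
  rcases h.isStrongClique.eq_or_adj hw hxy with h' | h' | rfl | h' | h' | h' | h' | h'
  · exact hxc h'.symm
  · exact hyc h'.symm
  · exact h3.not_adj_of_adj_of_adj hcw hdx.symm h.adj_cd.symm
  · exact hey h' hcw
  · exact h3.not_adj_of_adj_of_adj h' hdx.symm h.adj_cd.symm
  · exact hey rfl h'
  · exact h3.false_of_adj6 h6 hcw h' hax.symm h.adj_ab hbd h.adj_cd.symm (Ne.symm hxc) hwa
      hxb h.ne_ad h.ne_bc (Ne.symm hwd)
  · exact h3.false_of_adj5 h5 hcw h' hxy'.symm hdx.symm h.adj_cd.symm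

theorem mem_outerEdges_of_adj_bd (h : BridgedEdges G S a b c d) (h3 : CycleFree G 3)
    (h5 : CycleFree G 5) (h6 : CycleFree G 6) (hQ : G.commonNeighbors b c ⊆ {a, d})
    (hbd : G.Adj b d) (hO : (outerEdges S a b c d).Nonempty) {e : Sym2 V} (he : e ∈ S)
    (ha : a ∉ e) (hd : d ∉ e) : e ∈ outerEdges S a b c d := by
  obtain ⟨e₀, he₀⟩ := hO
  obtain ⟨x, y, rfl, hax, hdx⟩ :=
    h.exists_adj_a_adj_d_of_mem_outerEdges_of_adj_bd h3 h5 h6 hQ hbd he₀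
  refine mem_filter.2 ⟨he, ha, fun hb => ?_, fun hc => ?_, hd⟩
  · obtain ⟨z, rfl⟩ := Sym2.mem_iff_exists.1 hb
    exact h.false_of_mem_b_of_mem_outerEdges h3 h5 h6 hbd he (ne_of_notMem_mk ha).2
      (ne_of_notMem_mk hd).2 he₀ hax hdx
  · obtain ⟨z, rfl⟩ := Sym2.mem_iff_exists.1 hc
    exact h.false_of_mem_c_of_mem_outerEdges h3 h5 h6 hbd he (ne_of_notMem_mk ha).2
      (ne_of_notMem_mk hd).2 he₀ hax hdx

theorem exists_adj_a_of_mem_d_of_not_adj_bd (h : BridgedEdges G S a b c d) (h3 : CycleFree G 3)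
    (h5 : CycleFree G 5) (hQ : G.commonNeighbors b c ⊆ {a, d}) (hbd : ¬ G.Adj b d)
    {e : Sym2 V} (he : e ∈ S) (ha : a ∉ e) (hc : c ∉ e) (hd : d ∈ e) :
    ∃ w, e = s(d, w) ∧ G.Adj a w ∧ w ∉ ({b, c} : Finset V) := by
  obtain ⟨w, rfl⟩ := Sym2.mem_iff_exists.1 hd
  have hwb : w ≠ b := by
    rintro rfl
    exact ha (h.mem_a_of_mem_b_of_not_adj_bd h3 h5 hQ hbd he (Sym2.mem_mk_right d w))
  refine ⟨w, rfl, ?_, by simpa using ⟨hwb, (ne_of_notMem_mk hc).2⟩⟩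
  exact ((h.eq_or_adj_of_mem_d h3 h5 he).resolve_left hwb).resolve_left hbd

theorem exists_adj_a_adj_d_of_mem_outerEdges_of_mem_d (h : BridgedEdges G S a b c d)
    (h3 : CycleFree G 3) (h5 : CycleFree G 5) (h6 : CycleFree G 6)
    (hQ : G.commonNeighbors b c ⊆ {a, d}) (hw : s(d, w) ∈ S) (haw : G.Adj a w) (hwc : w ≠ c)
    {e : Sym2 V} (he : e ∈ outerEdges S a b c d) : ∃ x y, e = s(x, y) ∧ G.Adj a x ∧ G.Adj d x := by
  obtain ⟨x, y, rfl, hax, ht⟩ := h.exists_adj_a_of_mem_outerEdges h3 h5 h6 hQ he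
  exact ⟨x, y, rfl, hax, ht.elim id (h.adj_d_of_mem_outerEdges_of_mem_d h3 h6 hw haw hwc he hax)⟩

/-- Given an outer edge `xy`, a second edge `dw` with `w ≠ x` pins every edge `cz` of `S`
to `z = y`. -/
theorem card_filter_mem_c_le_two (h : BridgedEdges G S a b c d) (h3 : CycleFree G 3)
    (h5 : CycleFree G 5) (h6 : CycleFree G 6) (hQ : G.commonNeighbors b c ⊆ {a, d})
    (hbd : ¬ G.Adj b d) (hD : 2 ≤ (S.filter fun e => a ∉ e ∧ c ∉ e ∧ d ∈ e).card)
    (hO : (outerEdges S a b c d).Nonempty) : (S.filter fun e => a ∉ e ∧ c ∈ e).card ≤ 2 := by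
  obtain ⟨e₀, he₀⟩ := card_pos.1 (two_pos.trans_le hD)
  obtain ⟨he₀S, he₀a, he₀c, he₀d⟩ := mem_filter.1 he₀
  obtain ⟨w₀, rfl, haw₀, hw₀⟩ :=
    h.exists_adj_a_of_mem_d_of_not_adj_bd h3 h5 hQ hbd he₀S he₀a he₀c he₀d
  obtain ⟨_, he⟩ := hO
  obtain ⟨x, y, rfl, hax, hdx⟩ := h.exists_adj_a_adj_d_of_mem_outerEdges_of_mem_d h3 h5 h6 hQ
    he₀S haw₀ (fun hwc => hw₀ (by simp [hwc])) he
  obtain ⟨f, hf, hne⟩ := exists_mem_ne hD s(d, x)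
  obtain ⟨hfS, hfa, hfc, hfd⟩ := mem_filter.1 hf
  obtain ⟨w, rfl, haw, hw⟩ := h.exists_adj_a_of_mem_d_of_not_adj_bd h3 h5 hQ hbd hfS hfa hfc hfd
  have hsub : (S.filter fun e => a ∉ e ∧ c ∈ e) ⊆ {s(c, d), s(c, y)} := fun g hg => by
    obtain ⟨hgS, hga, hgc⟩ := mem_filter.1 hg
    obtain ⟨z, rfl⟩ := Sym2.mem_iff_exists.1 hgc
    rw [mem_insert, mem_singleton]
    by_cases hzd : z = d
    · exact .inl (by rw [hzd])
    refine .inr (by rw [h.eq_of_mem_c_of_mem_outerEdges h3 h5 h6 hgS (ne_of_notMem_mk hga).2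
      hzd he hax hdx haw (h.isStrongClique.adj hfS) (fun hwc => hw (by simp [hwc]))
      (by rintro rfl; exact hne rfl)])
  exact (card_le_card hsub).trans card_le_two

theorem exists_forall_mem_of_subset_outerEdges (h : BridgedEdges G S a b c d)
    (h3 : CycleFree G 3) (h5 : CycleFree G 5) (h6 : CycleFree G 6)
    (hQ : G.commonNeighbors b c ⊆ {a, d}) {E : Finset (Sym2 V)}
    (hE : E ⊆ outerEdges S a b c d) (hne : E.Nonempty) : ∃ v, ∀ e ∈ E, v ∈ e :=
  have ⟨_, he₀⟩ := hne
  exists_forall_mem_of_pairwise_inter h3 (fun _ he => h.isStrongClique.1 (mem_filter.1 (hE he)).1)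
    (fun _ he _ hf => h.exists_mem_inter_of_mem_outerEdges h3 h5 h6 hQ (hE he) (hE hf))
    (mem_coe.2 he₀)

/-- If the centre `v` of the outer edges is adjacent to neither `a` nor `c`, every outer edge
is `xv` with `x` a common neighbour of `a` and `d`, and two different such `x` would close the
hexagon `a x v x' d c`. -/
theorem card_outerEdges_le_one (h : BridgedEdges G S a b c d) (h3 : CycleFree G 3)
    (h5 : CycleFree G 5) (h6 : CycleFree G 6) (hQ : G.commonNeighbors b c ⊆ {a, d}) {v : V}
    (hv : ∀ e ∈ outerEdges S a b c d, v ∈ e) (hva : ¬ G.Adj v a) (hvc : ¬ G.Adj v c) :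
    (outerEdges S a b c d).card ≤ 1 := by
  have hkey : ∀ e ∈ outerEdges S a b c d, ∃ x, e = s(x, v) ∧ G.Adj a x ∧ G.Adj d x := by
    intro e he
    obtain ⟨x, y, rfl, hax, ht⟩ := h.exists_adj_a_of_mem_outerEdges h3 h5 h6 hQ he
    rcases Sym2.mem_iff.1 (hv _ he) with rfl | rfl
    · exact absurd hax.symm hva
    · exact ⟨x, rfl, hax, ht.resolve_right fun hcv => hvc hcv.symm⟩
  refine card_le_one.2 fun e he f hf => ?_
  obtain ⟨x, rfl, hax, -⟩ := hkey e he
  obtain ⟨x', rfl, -, hdx'⟩ := hkey f hf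
  obtain ⟨hS, -, hva', -, -, hxc, -, -, hvd⟩ := mem_outerEdges.1 he
  obtain ⟨hS', -, -, -, -, hx'c, -, -, -⟩ := mem_outerEdges.1 hf
  by_contra hne
  exact h3.false_of_adj6 h6 hax (h.isStrongClique.adj hS) (h.isStrongClique.adj hS').symm
    hdx'.symm h.adj_cd.symm h.adj_ac.symm (Ne.symm hva') (by rintro rfl; exact hne rfl) hvd
    hx'c h.ne_ad.symm (Ne.symm hxc)

variable [Fintype V] [DecidableRel G.Adj]

theorem card_add_two_le_maxDegree_of_forall_adj (h : BridgedEdges G S a b c d)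
    (h3 : CycleFree G 3) (h5 : CycleFree G 5) (h6 : CycleFree G 6)
    (hQ : G.commonNeighbors b c ⊆ {a, d})
    {E : Finset (Sym2 V)} (hE : E ⊆ outerEdges S a b c d) (hne : E.Nonempty)
    (had : ∀ e ∈ E, ∃ x ∈ e, G.Adj a x ∧ G.Adj d x) : E.card + 2 ≤ G.maxDegree := by
  have hout : ∀ e ∈ E, e ∈ S ∧ a ∉ e ∧ b ∉ e ∧ c ∉ e ∧ d ∉ e := fun e he => mem_filter.1 (hE he)
  obtain ⟨v, hv⟩ := h.exists_forall_mem_of_subset_outerEdges h3 h5 h6 hQ hE hne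
  by_cases hva : G.Adj v a ∧ G.Adj v d
  · have := card_add_card_le_degree (T := E) (U := {a, d}) (v := v)
      (fun e he => ⟨h.isStrongClique.1 (hout e he).1, hv e he, by simpa using
        ⟨(hout e he).2.1, (hout e he).2.2.2.2⟩⟩) (by simpa using hva)
    rw [card_pair h.ne_ad] at this
    exact this.trans (G.degree_le_maxDegree v)
  · -- otherwise every edge of `E` joins the centre `v` to a neighbour of `a` other than `b, c`
    have := card_add_card_le_degree_of_adj (T := E) (U := {b, c}) (u := a) (v := v)
      (fun e he => ?_) (by simpa using ⟨h.adj_ab, h.adj_ac⟩)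
    · rw [card_pair h.ne_bc] at this
      exact this.trans (G.degree_le_maxDegree a)
    obtain ⟨x, hxe, hax, hdx⟩ := had e he
    have hxv : v ≠ x := by rintro rfl; exact hva ⟨hax.symm, hdx.symm⟩
    refine ⟨x, ((Sym2.mem_and_mem_iff hxv).1 ⟨hv e he, hxe⟩), hax, ?_⟩
    simp only [mem_insert, mem_singleton, not_or]
    exact ⟨fun hxb => (hout e he).2.2.1 (hxb ▸ hxe), fun hxc => (hout e he).2.2.2.1 (hxc ▸ hxe)⟩

theorem card_outerEdges_add_one_le (h : BridgedEdges G S a b c d) (h3 : CycleFree G 3)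
    (h5 : CycleFree G 5) (h6 : CycleFree G 6) (hQ : G.commonNeighbors b c ⊆ {a, d}) :
    (outerEdges S a b c d).card + 1 ≤ G.maxDegree := by
  have hΔ := (h.two_le_degree).trans (G.degree_le_maxDegree a)
  obtain h0 | ⟨e₀, he₀⟩ := (outerEdges S a b c d).eq_empty_or_nonempty
  · rw [h0, card_empty]
    omega
  have hout : ∀ e ∈ outerEdges S a b c d, e ∈ S ∧ a ∉ e ∧ b ∉ e ∧ c ∉ e ∧ d ∉ e :=
    fun e he => mem_filter.1 he
  obtain ⟨v, hv⟩ :=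
    h.exists_forall_mem_of_subset_outerEdges h3 h5 h6 hQ subset_rfl ⟨e₀, he₀⟩
  by_cases hva : G.Adj v a ∨ G.Adj v c
  · obtain ⟨u, hu, hvu⟩ : ∃ u, (u = a ∨ u = c) ∧ G.Adj v u :=
      hva.elim (⟨a, .inl rfl, ·⟩) (⟨c, .inr rfl, ·⟩)
    have := card_add_card_le_degree (T := outerEdges S a b c d) (U := {u}) (v := v)
      (fun e he => ⟨h.isStrongClique.1 (hout e he).1, hv e he, by
        simpa using hu.elim (· ▸ (hout e he).2.1) (· ▸ (hout e he).2.2.2.1)⟩)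
      (by simpa using hvu)
    rw [card_singleton] at this
    exact this.trans (G.degree_le_maxDegree v)
  push Not at hva
  have := h.card_outerEdges_le_one h3 h5 h6 hQ hv hva.1 hva.2
  omega

theorem card_filter_notMem_add_two_le_of_adj_bd (h : BridgedEdges G S a b c d)
    (h3 : CycleFree G 3) (h5 : CycleFree G 5) (h6 : CycleFree G 6)
    (hQ : G.commonNeighbors b c ⊆ {a, d}) (hbd : G.Adj b d) :
    (S.filter fun e => a ∉ e ∧ d ∉ e).card + 2 ≤ G.maxDegree := by
  set R := S.filter fun e => a ∉ e ∧ d ∉ e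
  by_cases hO : (outerEdges S a b c d).Nonempty
  · have hRO : R ⊆ outerEdges S a b c d := fun e he =>
      h.mem_outerEdges_of_adj_bd h3 h5 h6 hQ hbd hO (mem_filter.1 he).1 (mem_filter.1 he).2.1
        (mem_filter.1 he).2.2
    obtain ⟨e₀, he₀⟩ := hO
    obtain ⟨he₀S, he₀a, -, -, he₀d⟩ := mem_filter.1 he₀
    refine h.card_add_two_le_maxDegree_of_forall_adj h3 h5 h6 hQ hRO
      ⟨e₀, mem_filter.2 ⟨he₀S, he₀a, he₀d⟩⟩ fun e he => ?_
    obtain ⟨x, y, rfl, hax, hdx⟩ :=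
      h.exists_adj_a_adj_d_of_mem_outerEdges_of_adj_bd h3 h5 h6 hQ hbd (hRO he)
    exact ⟨x, Sym2.mem_mk_left x y, hax, hdx⟩
  -- otherwise the edges of `R` all pass through `b`, or all through `c`
  have hbc : ∀ e ∈ R, b ∈ e ∨ c ∈ e := fun e he => by
    by_contra! hbc
    obtain ⟨heS, hae, hde⟩ := mem_filter.1 he
    exact hO ⟨e, mem_filter.2 ⟨heS, hae, hbc.1, hbc.2, hde⟩⟩
  have hstar : ∀ {v}, G.Adj v a → G.Adj v d → (∀ e ∈ R, v ∈ e) → R.card + 2 ≤ G.maxDegree := by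
    intro v hva hvd hv
    have := card_add_card_le_degree (T := R) (U := {a, d}) (v := v)
      (fun e he => ⟨h.isStrongClique.1 (mem_filter.1 he).1, hv e he,
        by simpa using (mem_filter.1 he).2⟩) (by simpa using ⟨hva, hvd⟩)
    rw [card_pair h.ne_ad] at this
    exact this.trans (G.degree_le_maxDegree v)
  by_cases hb : ∃ e ∈ R, b ∈ e
  · obtain ⟨e, he, hbe⟩ := hb
    obtain ⟨z, rfl⟩ := Sym2.mem_iff_exists.1 hbe
    obtain ⟨hzS, hza, hzd⟩ := mem_filter.1 he
    refine hstar h.adj_ab.symm hbd fun f hf => (hbc f hf).resolve_right fun hcf => ?_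
    obtain ⟨w, rfl⟩ := Sym2.mem_iff_exists.1 hcf
    obtain ⟨hwS, hwa, hwd⟩ := mem_filter.1 hf
    exact h.false_of_mem_b_of_mem_c h3 h5 hQ hzS (ne_of_notMem_mk hza).2 (ne_of_notMem_mk hzd).2
      hwS (ne_of_notMem_mk hwa).2 (ne_of_notMem_mk hwd).2
  push Not at hb
  exact hstar h.adj_ac.symm h.adj_cd fun e he => (hbc e he).resolve_left (hb e he)

theorem card_add_two_le_three_mul_of_adj_bd (h : BridgedEdges G S a b c d) (h3 : CycleFree G 3)
    (h5 : CycleFree G 5) (h6 : CycleFree G 6) (hQ : G.commonNeighbors b c ⊆ {a, d})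
    (hbd : G.Adj b d) : S.card + 2 ≤ 3 * G.maxDegree := by
  have hsub : S ⊆ S.filter (a ∈ ·) ∪ S.filter (d ∈ ·) ∪ S.filter fun e => a ∉ e ∧ d ∉ e :=
    fun e he => by simp only [mem_union, mem_filter]; tauto
  have hA : (S.filter (a ∈ ·)).card ≤ G.degree a :=
    card_le_degree fun e he => ⟨h.isStrongClique.1 (mem_filter.1 he).1, (mem_filter.1 he).2⟩
  have hD : (S.filter (d ∈ ·)).card ≤ G.degree d :=
    card_le_degree fun e he => ⟨h.isStrongClique.1 (mem_filter.1 he).1, (mem_filter.1 he).2⟩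
  have hR := h.card_filter_notMem_add_two_le_of_adj_bd h3 h5 h6 hQ hbd
  have := (card_le_card hsub).trans (card_union_le _ _)
  have := card_union_le (S.filter (a ∈ ·)) (S.filter (d ∈ ·))
  have := G.degree_le_maxDegree a
  have := G.degree_le_maxDegree d
  omega

theorem card_filter_mem_d_add_two_le (h : BridgedEdges G S a b c d) (h3 : CycleFree G 3)
    (h5 : CycleFree G 5) (hQ : G.commonNeighbors b c ⊆ {a, d}) (hbd : ¬ G.Adj b d) :
    (S.filter fun e => a ∉ e ∧ c ∉ e ∧ d ∈ e).card + 2 ≤ G.degree a := by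
  have := card_add_card_le_degree_of_adj (u := a) (v := d) (U := {b, c})
    (T := S.filter fun e => a ∉ e ∧ c ∉ e ∧ d ∈ e) (fun e he => by
      obtain ⟨heS, ha, hc, hd⟩ := mem_filter.1 he
      exact h.exists_adj_a_of_mem_d_of_not_adj_bd h3 h5 hQ hbd heS ha hc hd)
    (by simpa using ⟨h.adj_ab, h.adj_ac⟩)
  rwa [card_pair h.ne_bc] at this

theorem card_add_two_le_three_mul_of_not_adj_bd (h : BridgedEdges G S a b c d)
    (h3 : CycleFree G 3) (h5 : CycleFree G 5) (h6 : CycleFree G 6)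
    (hQ : G.commonNeighbors b c ⊆ {a, d}) (hbd : ¬ G.Adj b d) :
    S.card + 2 ≤ 3 * G.maxDegree := by
  set A := S.filter (a ∈ ·)
  set C := S.filter fun e => a ∉ e ∧ c ∈ e
  set D := S.filter fun e => a ∉ e ∧ c ∉ e ∧ d ∈ e
  set O := outerEdges S a b c d
  have hsub : S ⊆ A ∪ C ∪ D ∪ O := fun e he => by
    have hb := h.mem_a_of_mem_b_of_not_adj_bd h3 h5 hQ hbd he
    simp only [A, C, D, O, outerEdges, mem_union, mem_filter]
    tauto
  have hA : A.card ≤ G.degree a :=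
    card_le_degree fun e he => ⟨h.isStrongClique.1 (mem_filter.1 he).1, (mem_filter.1 he).2⟩
  have hC : C.card + ({a} : Finset V).card ≤ G.degree c :=
    card_add_card_le_degree (fun e he => ⟨h.isStrongClique.1 (mem_filter.1 he).1,
      (mem_filter.1 he).2.2, by simpa using (mem_filter.1 he).2.1⟩) (by simpa using h.adj_ac.symm)
  have hO : O.card + 1 ≤ G.maxDegree := h.card_outerEdges_add_one_le h3 h5 h6 hQ
  have hOD : 1 ≤ D.card → 1 ≤ O.card → O.card + 2 ≤ G.maxDegree := by
    intro hD hO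
    obtain ⟨e, he⟩ := one_le_card.1 hD
    obtain ⟨heS, hea, hec, hed⟩ := mem_filter.1 he
    obtain ⟨w, rfl, haw, hw⟩ := h.exists_adj_a_of_mem_d_of_not_adj_bd h3 h5 hQ hbd heS hea hec hed
    refine h.card_add_two_le_maxDegree_of_forall_adj h3 h5 h6 hQ subset_rfl (one_le_card.1 hO)
      fun f hf => ?_
    obtain ⟨x, y, rfl, hax, hdx⟩ := h.exists_adj_a_adj_d_of_mem_outerEdges_of_mem_d h3 h5 h6 hQ
      heS haw (fun hwc => hw (by simp [hwc])) hf
    exact ⟨x, Sym2.mem_mk_left x y, hax, hdx⟩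
  have hCD : 2 ≤ D.card → 1 ≤ O.card → C.card ≤ 2 := fun hD hO =>
    h.card_filter_mem_c_le_two h3 h5 h6 hQ hbd hD (one_le_card.1 hO)
  have hD : D.card + 2 ≤ G.degree a := h.card_filter_mem_d_add_two_le h3 h5 hQ hbd
  have := (card_le_card hsub).trans (card_union_le _ _)
  have := card_union_le (A ∪ C) D
  have := card_union_le A C
  have := G.degree_le_maxDegree a
  have := G.degree_le_maxDegree c
  rw [card_singleton] at hC
  omega

theorem card_add_two_le_three_mul_maxDegree (h : BridgedEdges G S a b c d) (h3 : CycleFree G 3)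
    (h5 : CycleFree G 5) (h6 : CycleFree G 6) : S.card + 2 ≤ 3 * G.maxDegree := by
  have key : ∀ {a b c d}, BridgedEdges G S a b c d →
      G.commonNeighbors b c ⊆ {a, d} → S.card + 2 ≤ 3 * G.maxDegree := by
    intro a b c d h hQ
    by_cases hbd : G.Adj b d
    · exact h.card_add_two_le_three_mul_of_adj_bd h3 h5 h6 hQ hbd
    · exact h.card_add_two_le_three_mul_of_not_adj_bd h3 h5 h6 hQ hbd
  rcases h.commonNeighbors_subset_or h3 h6 with hQ | hQ
  · exact key h hQ
  · exact key h.symm hQ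

end NoHexagon

end BridgedEdges

end

/-- For `k ∈ {2, 3}`, if `G` has no cycle of length 3, 5, or `2k`, and `Δ(G) ≥ 1`, then
the strong clique number of `G` is at most `kΔ(G) - (k - 1)`. -/
theorem stmt13 {V : Type*} [Fintype V] [DecidableEq V] (G : SimpleGraph V)
    [DecidableRel G.Adj] (k : ℕ) (hk : k = 2 ∨ k = 3)
    (hc3 : CycleFree G 3) (hc5 : CycleFree G 5) (hc2k : CycleFree G (2 * k))
    (hΔ : 1 ≤ G.maxDegree)
    (S : Finset (Sym2 V)) (hS : IsStrongClique G ↑S) :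
    (S.card : ℤ) ≤ k * G.maxDegree - (k - 1) := by
  rcases hS.card_le_maxDegree_or_bridgedEdges hc3 with hstar | ⟨a, b, c, d, h⟩
  · rcases hk with rfl | rfl <;> push_cast <;> omega
  rcases hk with rfl | rfl
  · have := h.card_add_one_le_two_mul_maxDegree hc3 hc2k hc5
    push_cast
    omega
  · have := h.card_add_two_le_three_mul_maxDegree hc3 hc5 hc2k
    push_cast
    omega
end

section
/- Let M be a matching of a graph G that is also a strong clique of G, with |M| = m ≥ 3, and let x ∈ V(M). Then there is no (x,M)-path of length 2 in G if and only if M is x-special. -/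
/-- `M` is a matching of `G`: a set of edges of `G` that are pairwise disjoint. -/
def IsMatchingSet {V : Type*} (G : SimpleGraph V) (M : Set (Sym2 V)) : Prop :=
  M ⊆ G.edgeSet ∧ ∀ e ∈ M, ∀ f ∈ M, e ≠ f → ∀ v : V, v ∈ e → v ∉ f

/-- An `(x, M)`-path: a path `P` in `G[V(M)]` starting at `x` such that the last edge of
`P` is not in `M`, and every edge of `M` with both endpoints on `P` is an edge of `P`. -/
def IsXMPath {V : Type*} (G : SimpleGraph V) (M : Finset (Sym2 V))
    {x y : V} (P : G.Walk x y) : Prop :=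
  P.IsPath ∧
    (∀ v ∈ P.support, ∃ e ∈ M, v ∈ e) ∧
    (∀ e ∈ P.edges.getLast?, e ∉ M) ∧
    (∀ e ∈ M, (∀ v ∈ e, v ∈ P.support) → e ∈ P.edges)

/-- `M` is an `x`-special matching, where `x'` is the `M`-partner of `x`: every edge
`e ≠ xx'` of `M` can be written as `e = (hd e)(tl e)` where `x` is adjacent to all heads
and to nothing else among `V(M) \ {x, x'}`, `x'` is adjacent to no head or tail, the tails
are pairwise adjacent, the heads are pairwise non-adjacent, and no head is adjacent to a
tail of a different edge. -/
def IsSpecialMatching {V : Type*} (G : SimpleGraph V) (M : Finset (Sym2 V))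
    (x x' : V) : Prop :=
  s(x, x') ∈ M ∧
    ∃ hd tl : Sym2 V → V,
      ∀ e ∈ M, e ≠ s(x, x') →
        e = s(hd e, tl e) ∧
        G.Adj x (hd e) ∧ ¬ G.Adj x (tl e) ∧
        ¬ G.Adj x' (hd e) ∧ ¬ G.Adj x' (tl e) ∧
        ∀ f ∈ M, f ≠ s(x, x') → e ≠ f →
          G.Adj (tl e) (tl f) ∧ ¬ G.Adj (hd e) (hd f) ∧ ¬ G.Adj (hd e) (tl f)

/-!
Within `V(M)`, an `(x, M)`-path of length two is a path `x a b` with `ab, xb ∉ M`.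
Forbidding these says that `x'` has no neighbour in `V(M) \ {x, x'}` (path `x x' u`), and that
a neighbour `u` of `x` in an edge `e ≠ xx'` has no neighbour in a third edge (path `x u w`).
The strong clique property then gives every edge `e ≠ xx'` exactly one endpoint adjacent to `x`,
its head: at least one because `e` can only see `xx'` through `x`, at most one because `e` sees a
third edge, which exists as `m ≥ 3`. Two tails are adjacent since heads see nothing outside their
own edge. Conversely, in an `x`-special matching the neighbours of `x` in `V(M)` are `x'` and the
heads, whose only neighbours there are `x` and their own tails, so every path `x a b` in `V(M)`
returns to `x` or ends with an edge of `M`.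
-/

open SimpleGraph

theorem Finset.exists_mem_ne_ne {α : Type*} {s : Finset α} (hs : 2 < s.card) (a b : α) :
    ∃ c ∈ s, c ≠ a ∧ c ≠ b := by
  classical
  obtain ⟨c, hc, hcab⟩ :=
    Finset.exists_mem_notMem_of_card_lt_card (s := {a, b}) (Finset.card_le_two.trans_lt hs)
  simp only [Finset.mem_insert, Finset.mem_singleton, not_or] at hcab
  exact ⟨c, hc, hcab⟩

section

variable {V : Type*} {G : SimpleGraph V} {M : Finset (Sym2 V)} {e f : Sym2 V} {u v w x x' : V}

namespace IsMatchingSet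

theorem ne_of_mem (hM : IsMatchingSet G ↑M) (he : e ∈ M) (hf : f ∈ M) (hef : e ≠ f)
    (hv : v ∈ e) (hw : w ∈ f) : v ≠ w := by
  rintro rfl
  exact hM.2 e he f hf hef v hv hw

theorem eq_of_mem (hM : IsMatchingSet G ↑M) (he : e ∈ M) (hf : f ∈ M) (hve : v ∈ e)
    (hvf : v ∈ f) : e = f := by
  by_contra hef
  exact hM.ne_of_mem he hf hef hve hvf rfl

theorem mk_notMem (hM : IsMatchingSet G ↑M) (he : e ∈ M) (hf : f ∈ M) (hef : e ≠ f)
    (hv : v ∈ e) (hw : w ∈ f) : s(v, w) ∉ M := fun h =>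
  hef ((hM.eq_of_mem he h hv (Sym2.mem_mk_left v w)).trans
    (hM.eq_of_mem h hf (Sym2.mem_mk_right v w) hw))

end IsMatchingSet

theorem IsStrongClique.exists_adj_of_ne (hsc : IsStrongClique G ↑M) (hM : IsMatchingSet G ↑M)
    (he : e ∈ M) (hf : f ∈ M) (hef : e ≠ f) : ∃ a ∈ e, ∃ b ∈ f, G.Adj a b := by
  obtain ⟨a, b, ha, hb, rfl | hab⟩ := hsc.2 e he f hf
  · exact absurd rfl (hM.ne_of_mem he hf hef ha hb)
  · exact ⟨a, ha, b, hb, hab⟩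

theorem IsXMPath.exists_of_length_eq_two {y : V} {P : G.Walk x y} (hP : IsXMPath G M P)
    (hlen : P.length = 2) :
    ∃ a, G.Adj x a ∧ G.Adj a y ∧ x ≠ y ∧ (∃ e ∈ M, a ∈ e) ∧ (∃ e ∈ M, y ∈ e) ∧
      s(a, y) ∉ M := by
  obtain ⟨hpath, hsupp, hlast, -⟩ := hP
  match P, hlen with
  | .cons hxa (.cons hay .nil), _ =>
    have hnodup := hpath.support_nodup
    simp only [Walk.support_cons, Walk.support_nil, List.nodup_cons, List.mem_cons,
      List.not_mem_nil, or_false] at hnodup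
    exact ⟨_, hxa, hay, fun h => hnodup.1 (Or.inr h), hsupp _ (by simp), hsupp _ (by simp),
      hlast _ (by simp)⟩

theorem isXMPath_cons_cons {a b : V} (hMG : ↑M ⊆ G.edgeSet) (hxa : G.Adj x a) (hab : G.Adj a b)
    (hxb : x ≠ b) (hx : ∃ e ∈ M, x ∈ e) (ha : ∃ e ∈ M, a ∈ e) (hb : ∃ e ∈ M, b ∈ e)
    (habM : s(a, b) ∉ M) (hxbM : s(x, b) ∉ M) :
    IsXMPath G M (.cons hxa (.cons hab .nil)) := by
  refine ⟨by simp [Walk.isPath_def, hxa.ne, hxb, hab.ne], ?_, by simpa using habM, ?_⟩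
  · simp only [Walk.support_cons, Walk.support_nil, List.mem_cons, List.not_mem_nil, or_false]
    rintro v (rfl | rfl | rfl) <;> assumption
  · intro e he hsupp
    induction e using Sym2.ind with
    | _ u v =>
    have huv : G.Adj u v := hMG he
    simp only [Walk.support_cons, Walk.support_nil, List.mem_cons, List.not_mem_nil, or_false,
      Sym2.mem_iff, forall_eq_or_imp, forall_eq] at hsupp
    simp only [Walk.edges_cons, Walk.edges_nil, List.mem_cons, List.not_mem_nil, or_false,
      Sym2.eq_iff]
    obtain ⟨rfl | rfl | rfl, rfl | rfl | rfl⟩ := hsupp <;>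
      first | exact absurd rfl huv.ne | tauto | exact absurd (Sym2.eq_swap ▸ he) ‹_›

section Special

variable {hd tl : Sym2 V → V}
  (hspec : ∀ e ∈ M, e ≠ s(x, x') →
    e = s(hd e, tl e) ∧
    G.Adj x (hd e) ∧ ¬ G.Adj x (tl e) ∧
    ¬ G.Adj x' (hd e) ∧ ¬ G.Adj x' (tl e) ∧
    ∀ f ∈ M, f ≠ s(x, x') → e ≠ f →
      G.Adj (tl e) (tl f) ∧ ¬ G.Adj (hd e) (hd f) ∧ ¬ G.Adj (hd e) (tl f))
include hspec

theorem eq_or_eq_or_exists_of_mem (hf : f ∈ M) (hv : v ∈ f) :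
    v = x ∨ v = x' ∨ ∃ f ∈ M, f ≠ s(x, x') ∧ (v = hd f ∨ v = tl f) := by
  by_cases hfx : f = s(x, x')
  · subst hfx
    rw [Sym2.mem_iff] at hv
    tauto
  · rw [(hspec f hf hfx).1, Sym2.mem_iff] at hv
    exact Or.inr (Or.inr ⟨f, hf, hfx, hv⟩)

theorem eq_of_adj_partner (hv : ∃ f ∈ M, v ∈ f) (hadj : G.Adj x' v) : v = x := by
  obtain ⟨f, hf, hvf⟩ := hv
  obtain rfl | rfl | ⟨f, hf, hfx, rfl | rfl⟩ := eq_or_eq_or_exists_of_mem hspec hf hvf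
  · rfl
  · exact absurd hadj G.irrefl
  · exact absurd hadj (hspec f hf hfx).2.2.2.1
  · exact absurd hadj (hspec f hf hfx).2.2.2.2.1

theorem eq_or_eq_of_adj_head (he : e ∈ M) (hex : e ≠ s(x, x')) (hv : ∃ f ∈ M, v ∈ f)
    (hadj : G.Adj (hd e) v) : v = x ∨ v = tl e := by
  obtain ⟨f, hf, hvf⟩ := hv
  obtain ⟨-, -, -, hx'e, -, hcross⟩ := hspec e he hex
  obtain rfl | rfl | ⟨f, hf, hfx, rfl | rfl⟩ := eq_or_eq_or_exists_of_mem hspec hf hvf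
  · exact Or.inl rfl
  · exact absurd hadj.symm hx'e
  · obtain rfl | hef := eq_or_ne e f
    · exact absurd hadj G.irrefl
    · exact absurd hadj (hcross f hf hfx hef).2.1
  · obtain rfl | hef := eq_or_ne e f
    · exact Or.inr rfl
    · exact absurd hadj (hcross f hf hfx hef).2.2

theorem eq_partner_or_exists_eq_head_of_adj (hv : ∃ f ∈ M, v ∈ f) (hadj : G.Adj x v) :
    v = x' ∨ ∃ e ∈ M, e ≠ s(x, x') ∧ v = hd e := by
  obtain ⟨f, hf, hvf⟩ := hv
  obtain rfl | rfl | ⟨f, hf, hfx, rfl | rfl⟩ := eq_or_eq_or_exists_of_mem hspec hf hvf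
  · exact absurd hadj G.irrefl
  · exact Or.inl rfl
  · exact Or.inr ⟨f, hf, hfx, rfl⟩
  · exact absurd hadj (hspec f hf hfx).2.2.1

theorem not_exists_xmPath_length_two :
    ¬ ∃ (y : V) (P : G.Walk x y), IsXMPath G M P ∧ P.length = 2 := by
  rintro ⟨y, P, hP, hlen⟩
  obtain ⟨a, hxa, hay, hxy, ha, hy, hayM⟩ := hP.exists_of_length_eq_two hlen
  obtain rfl | ⟨e, he, hex, rfl⟩ := eq_partner_or_exists_eq_head_of_adj hspec ha hxa
  · exact hxy (eq_of_adj_partner hspec hy hay).symm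
  · obtain rfl | rfl := eq_or_eq_of_adj_head hspec he hex hy hay
    · exact hxy rfl
    · exact hayM ((hspec e he hex).1 ▸ he)

end Special

section NoShortPath

variable (hM : IsMatchingSet G ↑M) (hx : s(x, x') ∈ M)
  (hno : ¬ ∃ (y : V) (P : G.Walk x y), IsXMPath G M P ∧ P.length = 2)
include hM hx hno

theorem not_adj_partner_of_mem (he : e ∈ M) (hex : e ≠ s(x, x')) (hu : u ∈ e) :
    ¬ G.Adj x' u := fun hadj =>
  hno ⟨u, _, isXMPath_cons_cons hM.1 (hM.1 hx) hadj
    (hM.ne_of_mem hx he hex.symm (Sym2.mem_mk_left x x') hu) ⟨_, hx, Sym2.mem_mk_left x x'⟩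
    ⟨_, hx, Sym2.mem_mk_right x x'⟩ ⟨e, he, hu⟩
    (hM.mk_notMem hx he hex.symm (Sym2.mem_mk_right x x') hu)
    (hM.mk_notMem hx he hex.symm (Sym2.mem_mk_left x x') hu), rfl⟩

theorem not_adj_of_adj_of_mem (he : e ∈ M) (hu : u ∈ e)
    (hf : f ∈ M) (hfx : f ≠ s(x, x')) (hef : e ≠ f) (hw : w ∈ f) (hxu : G.Adj x u) :
    ¬ G.Adj u w := fun hadj =>
  hno ⟨w, _, isXMPath_cons_cons hM.1 hxu hadj
    (hM.ne_of_mem hx hf hfx.symm (Sym2.mem_mk_left x x') hw) ⟨_, hx, Sym2.mem_mk_left x x'⟩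
    ⟨e, he, hu⟩ ⟨f, hf, hw⟩ (hM.mk_notMem he hf hef hu hw)
    (hM.mk_notMem hx hf hfx.symm (Sym2.mem_mk_left x x') hw), rfl⟩

variable (hsc : IsStrongClique G ↑M)
include hsc

theorem exists_adj_of_mem (he : e ∈ M) (hex : e ≠ s(x, x')) : ∃ u ∈ e, G.Adj x u := by
  obtain ⟨a, ha, b, hb, hab⟩ := hsc.exists_adj_of_ne hM he hx hex
  obtain rfl | rfl := Sym2.mem_iff.1 hb
  · exact ⟨a, ha, hab.symm⟩
  · exact absurd hab.symm (not_adj_partner_of_mem hM hx hno he hex ha)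

theorem not_adj_snd_of_adj_fst (hM3 : 2 < M.card) (he : s(u, v) ∈ M)
    (hex : s(u, v) ≠ s(x, x')) (hxu : G.Adj x u) : ¬ G.Adj x v := by
  intro hxv
  obtain ⟨f, hf, hfe, hfx⟩ := Finset.exists_mem_ne_ne hM3 s(u, v) s(x, x')
  obtain ⟨a, ha, b, hb, hab⟩ := hsc.exists_adj_of_ne hM he hf hfe.symm
  have hxa : G.Adj x a := by obtain rfl | rfl := Sym2.mem_iff.1 ha <;> assumption
  exact not_adj_of_adj_of_mem hM hx hno he ha hf hfx hfe.symm hb hxa hab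

theorem adj_snd_snd_of_adj_fst {h t h' t' : V} (he : s(h, t) ∈ M) (hf : s(h', t') ∈ M)
    (hex : s(h, t) ≠ s(x, x')) (hfx : s(h', t') ≠ s(x, x')) (hef : s(h, t) ≠ s(h', t'))
    (hxh : G.Adj x h) (hxh' : G.Adj x h') : G.Adj t t' := by
  obtain ⟨a, ha, b, hb, hab⟩ := hsc.exists_adj_of_ne hM he hf hef
  obtain rfl | rfl := Sym2.mem_iff.1 ha
  · exact absurd hab (not_adj_of_adj_of_mem hM hx hno he ha hf hfx hef hb hxh)
  obtain rfl | rfl := Sym2.mem_iff.1 hb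
  · exact absurd hab.symm (not_adj_of_adj_of_mem hM hx hno hf hb he hex hef.symm ha hxh')
  · exact hab

theorem isSpecialMatching_of_not_exists_xmPath_length_two (hM3 : 2 < M.card) :
    IsSpecialMatching G M x x' := by
  have horient : ∀ e, ∃ p : V × V, e ∈ M → e ≠ s(x, x') →
      e = s(p.1, p.2) ∧ G.Adj x p.1 ∧ ¬ G.Adj x p.2 := by
    intro e
    by_cases h : e ∈ M ∧ e ≠ s(x, x')
    · obtain ⟨u, hu, hxu⟩ := exists_adj_of_mem hM hx hno hsc h.1 h.2
      refine ⟨(u, Sym2.Mem.other hu), fun he hex => ⟨(Sym2.other_spec hu).symm, hxu, ?_⟩⟩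
      rw [← Sym2.other_spec hu] at he hex
      exact not_adj_snd_of_adj_fst hM hx hno hsc hM3 he hex hxu
    · exact ⟨(x, x), fun he hex => absurd ⟨he, hex⟩ h⟩
  choose p hp using horient
  refine ⟨hx, fun e => (p e).1, fun e => (p e).2, fun e he hex => ?_⟩
  dsimp only
  obtain ⟨hep, hxh, hxt⟩ := hp e he hex
  generalize (p e).1 = h, (p e).2 = t at *
  subst hep
  refine ⟨rfl, hxh, hxt, not_adj_partner_of_mem hM hx hno he hex (Sym2.mem_mk_left h t),
    not_adj_partner_of_mem hM hx hno he hex (Sym2.mem_mk_right h t), fun f hf hfx hef => ?_⟩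
  obtain ⟨hfp, hxh', -⟩ := hp f hf hfx
  generalize (p f).1 = h', (p f).2 = t' at *
  subst hfp
  exact ⟨adj_snd_snd_of_adj_fst hM hx hno hsc he hf hex hfx hef hxh hxh',
    not_adj_of_adj_of_mem hM hx hno he (Sym2.mem_mk_left h t) hf hfx hef
      (Sym2.mem_mk_left h' t') hxh,
    not_adj_of_adj_of_mem hM hx hno he (Sym2.mem_mk_left h t) hf hfx hef
      (Sym2.mem_mk_right h' t') hxh⟩

end NoShortPath

end

theorem stmt14_general {V : Type*} (G : SimpleGraph V)
    (M : Finset (Sym2 V))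
    (hmatch : IsMatchingSet G ↑M) (hsc : IsStrongClique G ↑M)
    (m : ℕ) (hm : M.card = m) (hm3 : 3 ≤ m)
    (x x' : V) (hx : s(x, x') ∈ M) :
    (¬ ∃ (y : V) (P : G.Walk x y), IsXMPath G M P ∧ P.length = 2) ↔
      IsSpecialMatching G M x x' := by
  refine ⟨fun hno => isSpecialMatching_of_not_exists_xmPath_length_two hmatch hx hno hsc
    (by omega), fun ⟨_, hd, tl, hspec⟩ => not_exists_xmPath_length_two hspec⟩

/-- Let `M` be a matching of `G` that is also a strong clique of `G`, with `|M| = m ≥ 3`,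
and let `x ∈ V(M)` with `M`-partner `x'`. Then there is no `(x, M)`-path of length 2 in
`G` if and only if `M` is `x`-special. -/
theorem stmt14 {V : Type*} [Fintype V] [DecidableEq V] (G : SimpleGraph V)
    (M : Finset (Sym2 V))
    (hmatch : IsMatchingSet G ↑M) (hsc : IsStrongClique G ↑M)
    (m : ℕ) (hm : M.card = m) (hm3 : 3 ≤ m)
    (x x' : V) (hx : s(x, x') ∈ M) :
    (¬ ∃ (y : V) (P : G.Walk x y), IsXMPath G M P ∧ P.length = 2) ↔
      IsSpecialMatching G M x x' :=
  stmt14_general G M hmatch hsc m hm hm3 x x' hx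
end
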